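/- arXiv:1710.09467 — 5 statements merged into one kernel-verified Lean document; each statement's English description precedes it below -/
import Mathlib

section
/- If P is a height-2 finite poset in which every maximal element is comparable with at most d minimal elements, then bdim(P) ≤ 2d. -/
/-- A linear extension of the partial order on `α`: a linear order relation
containing the partial order. -/
def IsLinearExtension {α : Type*} [PartialOrder α] (r : α → α → Prop) : Prop :=
  IsLinearOrder α r ∧ ∀ x y : α, x ≤ y → r x y

/-- `P` has a realizer of size `d`: `d` linear extensions whose intersection is the order. -/
def HasRealizer (α : Type*) [PartialOrder α] (d : ℕ) : Prop :=
  ∃ L : Fin d → (α → α → Prop),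
    (∀ i, IsLinearExtension (L i)) ∧ (∀ x y : α, (∀ i, L i x y) → x ≤ y)

/-- The Dushnik–Miller dimension of a poset. -/
noncomputable def dimDM (α : Type*) [PartialOrder α] : ℕ :=
  sInf {d | 0 < d ∧ HasRealizer α d}

/-- A Boolean realizer of size `d`: `d` linear orders on the ground set together with a
"decoder" `τ` determining the order from the query vector. -/
def HasBooleanRealizer (α : Type*) [PartialOrder α] (d : ℕ) : Prop :=
  ∃ (B : Fin d → (α → α → Prop)) (τ : (Fin d → Prop) → Prop),
    (∀ i, IsLinearOrder α (B i)) ∧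
    ∀ x y : α, x ≠ y → (x < y ↔ τ (fun i => B i x y))

/-- The Boolean dimension of a poset. -/
noncomputable def bdim (α : Type*) [PartialOrder α] : ℕ :=
  sInf {d | 0 < d ∧ HasBooleanRealizer α d}

/-- A partial linear extension of the poset `α`: a linear extension of a subposet. -/
structure PLE (α : Type*) [PartialOrder α] where
  S : Set α
  r : α → α → Prop
  mem_of_rel : ∀ x y, r x y → x ∈ S ∧ y ∈ S
  refl : ∀ x ∈ S, r x x
  antisymm' : ∀ x y, r x y → r y x → x = y
  trans' : ∀ x y z, r x y → r y z → r x z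
  total : ∀ x ∈ S, ∀ y ∈ S, r x y ∨ r y x
  extends_le : ∀ x ∈ S, ∀ y ∈ S, x ≤ y → r x y

/-- A family of ple's is a local realizer when every comparability appears in some member
and every incomparable pair is reversed in some member. -/
def IsLocalRealizer {α : Type*} [PartialOrder α] {t : ℕ} (L : Fin t → PLE α) : Prop :=
  (∀ x y : α, x ≤ y → ∃ i, x ∈ (L i).S ∧ y ∈ (L i).S) ∧
  (∀ x y : α, ¬ x ≤ y → ¬ y ≤ x → ∃ i, (L i).r y x)

/-- The local dimension of a poset. -/
noncomputable def ldim (α : Type*) [PartialOrder α] : ℕ :=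
  sInf {k | 0 < k ∧ ∃ (t : ℕ) (L : Fin t → PLE α),
    IsLocalRealizer L ∧ ∀ u : α, ({i | u ∈ (L i).S} : Set (Fin t)).ncard ≤ k}

private lemma block_lt {N a b t s : ℕ} (ht : t ≤ N) (hab : a < b) :
    a * (N + 1) + t < b * (N + 1) + s := by
  have h1 : (a + 1) * (N + 1) ≤ b * (N + 1) := Nat.mul_le_mul_right _ hab
  have h2 : (a + 1) * (N + 1) = a * (N + 1) + (N + 1) := by ring
  linarith

private lemma block_eq {N a b t s : ℕ} (ht : t ≤ N) (hs : s ≤ N)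
    (h : a * (N + 1) + t = b * (N + 1) + s) : a = b ∧ t = s := by
  rcases Nat.lt_trichotomy a b with hab | hab | hab
  · exact absurd h (Nat.ne_of_lt (block_lt ht hab))
  · refine ⟨hab, ?_⟩; subst hab; exact Nat.add_left_cancel h
  · exact absurd h.symm (Nat.ne_of_lt (block_lt hs hab))

private lemma isLinearOrder_pullback {α : Type*} (φ : α → ℕ)
    (hφ : Function.Injective φ) : IsLinearOrder α (fun x y => φ x ≤ φ y) where
  refl _ := le_refl _
  trans _ _ _ := le_trans
  antisymm _ _ h1 h2 := hφ (le_antisymm h1 h2)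
  total _ _ := le_total _ _

private lemma star_exists {α : Type*} (n : ℕ) (key : α → ℕ)
    (hinj : Function.Injective key) (hlt : ∀ x, key x < n)
    (c : α → α) (hcc : ∀ x, c (c x) = c x) :
    ∃ φ0 φ1 : α → ℕ, Function.Injective φ0 ∧ Function.Injective φ1 ∧
      ∀ x y : α, x ≠ y → ((φ0 x ≤ φ0 y ∧ φ1 x ≤ φ1 y) ↔ c y = x) := by
  classical
  refine ⟨fun x => key (c x) * (n + 1) + (if c x = x then 0 else key x + 1),
          fun x => (n - key (c x)) * (n + 1) + (if c x = x then 0 else n - key x),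
          ?_, ?_, ?_⟩
  · intro x y h
    have ht : (if c x = x then 0 else key x + 1) ≤ n := by
      split
      · omega
      · exact hlt x
    have hs : (if c y = y then 0 else key y + 1) ≤ n := by
      split
      · omega
      · exact hlt y
    obtain ⟨h1, h2⟩ := block_eq ht hs h
    have hcxy : c x = c y := hinj h1
    by_cases hx : c x = x <;> by_cases hy : c y = y <;>
      simp only [if_pos, if_neg, hx, hy, if_true, if_false] at h2 <;>
      first
        | (exact hx ▸ hy ▸ hcxy)
        | omega
        | (exact hinj (by omega))
  · intro x y h
    have ht : (if c x = x then 0 else n - key x) ≤ n := by split <;> omega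
    have hs : (if c y = y then 0 else n - key y) ≤ n := by split <;> omega
    obtain ⟨h1, h2⟩ := block_eq ht hs h
    have hcxy : c x = c y := hinj (by have := hlt (c x); have := hlt (c y); omega)
    by_cases hx : c x = x <;> by_cases hy : c y = y <;>
      simp only [if_pos, if_neg, hx, hy, if_true, if_false] at h2
    · exact hx ▸ hy ▸ hcxy
    · have := hlt y; omega
    · have := hlt x; omega
    · exact hinj (by have := hlt x; have := hlt y; omega)
  · intro x y hxy
    beta_reduce
    by_cases hc : c x = c y
    · by_cases hx : c x = x
      · by_cases hy : c y = y
        · exact absurd (hx ▸ hy ▸ hc) hxy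
        · have hcy : c y = x := hc.symm.trans hx
          refine iff_of_true ⟨?_, ?_⟩ hcy <;> rw [if_pos hx, if_neg hy, hc] <;> omega
      · by_cases hy : c y = y
        · refine iff_of_false (fun h => ?_) (fun h => hxy (h.symm.trans hy))
          obtain ⟨ha, _⟩ := h
          rw [if_neg hx, if_pos hy, hc] at ha
          omega
        · refine iff_of_false (fun h => ?_) (fun h => hx (hc.trans h))
          obtain ⟨ha, hb⟩ := h
          rw [if_neg hx, if_neg hy, hc] at ha hb
          have hnx := hlt x
          have hny := hlt y
          exact hxy (hinj (by omega))
    · refine iff_of_false (fun h => ?_) (fun h => hc (by rw [← h, hcc]))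
      obtain ⟨ha, hb⟩ := h
      have hkc : key (c x) ≠ key (c y) := fun h => hc (hinj h)
      have hncx := hlt (c x)
      have hncy := hlt (c y)
      rcases Nat.lt_or_ge (key (c x)) (key (c y)) with hlt' | hge
      · have hkey : (n - key (c y)) * (n + 1) + (if c y = y then 0 else n - key y)
             < (n - key (c x)) * (n + 1) + (if c x = x then 0 else n - key x) := by
          apply block_lt
          · split <;> omega
          · omega
        omega
      · have hlt'' : key (c y) < key (c x) := by omega
        have hkey : key (c y) * (n + 1) + (if c y = y then 0 else key y + 1)
             < key (c x) * (n + 1) + (if c x = x then 0 else key x + 1) := by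
          apply block_lt
          · split
            · omega
            · exact hlt y
          · exact hlt''
        omega

/-- If `P` is a finite poset of height 2 (it has a 2-element chain but no 3-element chain)
in which every maximal element is comparable with at most `d` minimal elements,
then `bdim P ≤ 2d`. -/
theorem bdim_le_of_height_two (α : Type*) [Fintype α] [PartialOrder α] (d : ℕ)
    (hchain : ∃ x y : α, x < y)
    (hht : ¬ ∃ x y z : α, x < y ∧ y < z)
    (hdeg : ∀ b : α, IsMax b → ({m : α | IsMin m ∧ m < b}).ncard ≤ d) :
    bdim α ≤ 2 * d := by
  classical
  obtain ⟨x0, y0, hxy0⟩ := hchain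
  have hmax : ∀ {x y : α}, x < y → IsMax y := by
    intro x y h z hz
    by_contra hzy
    exact hht ⟨x, y, z, h, lt_of_le_not_ge hz hzy⟩
  have hmin : ∀ {x y : α}, x < y → IsMin x := by
    intro x y h z hz
    by_contra hxz
    exact hht ⟨z, x, y, lt_of_le_not_ge hz hxz, h⟩
  set D : α → Set α := fun b => {m : α | IsMin m ∧ m < b} with hD
  have hDfin : ∀ b, (D b).Finite := fun b => Set.toFinite _
  have hDcard : ∀ b : α, (D b).ncard ≤ d := by
    intro b
    by_cases hb : IsMax b
    · exact hdeg b hb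
    · have hempty : D b = ∅ := by
        ext m
        simp only [hD, Set.mem_setOf_eq, Set.mem_empty_iff_false, iff_false, not_and]
        intro _ hmb
        exact absurd (hmax hmb) hb
      simp [hempty]
  have hd : 0 < d := by
    rcases Nat.eq_zero_or_pos d with h0 | h
    · exfalso
      have h1 : (D y0).ncard ≤ 0 := h0 ▸ hDcard y0
      have h2 : x0 ∈ D y0 := ⟨hmin hxy0, hxy0⟩
      have h3 := (Set.ncard_pos (hDfin y0)).mpr ⟨x0, h2⟩
      omega
    · exact h
  have hf : ∀ b : α, ∃ g : α → Fin d, ∀ a ∈ D b, ∀ a' ∈ D b, g a = g a' → a = a' := by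
    intro b
    letI : Fintype (D b) := (hDfin b).fintype
    have hcard : Fintype.card (D b) ≤ d := by
      rw [← Nat.card_eq_fintype_card, Nat.card_coe_set_eq]
      exact hDcard b
    let e : D b ↪ Fin d := (Fintype.equivFin (D b)).toEmbedding.trans (Fin.castLEEmb hcard)
    refine ⟨fun a => if h : a ∈ D b then e ⟨a, h⟩ else ⟨0, hd⟩, ?_⟩
    intro a ha a' ha' hgg
    beta_reduce at hgg
    rw [dif_pos ha, dif_pos ha'] at hgg
    exact congrArg Subtype.val (e.injective hgg)
  choose g hg using hf
  set M : Fin d → α → α → Prop := fun j a b => a ∈ D b ∧ g b a = j with hM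
  have hMuniq : ∀ j a a' b, M j a b → M j a' b → a = a' := by
    rintro j a a' b ⟨ha, hja⟩ ⟨ha', hja'⟩
    exact hg b a ha a' ha' (hja.trans hja'.symm)
  set c : Fin d → α → α := fun j y => if h : ∃ a, M j a y then h.choose else y with hc
  have hcM : ∀ j y, (∃ a, M j a y) → M j (c j y) y := by
    intro j y h
    rw [hc]; dsimp only; rw [dif_pos h]; exact h.choose_spec
  have hcself : ∀ j y, ¬(∃ a, M j a y) → c j y = y := by
    intro j y h; rw [hc]; dsimp only; rw [dif_neg h]
  have hceq : ∀ j a y, M j a y → c j y = a := by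
    intro j a y hM'
    exact hMuniq j _ a y (hcM j y ⟨a, hM'⟩) hM'
  have hcc : ∀ j x, c j (c j x) = c j x := by
    intro j x
    by_cases h : ∃ a, M j a x
    · have hm := hcM j x h
      apply hcself
      rintro ⟨a, ⟨⟨_, halt⟩, -⟩⟩
      have hmin' : IsMin (c j x) := hm.1.1
      exact (show a < c j x from halt).not_ge (hmin' (show a < c j x from halt).le)
    · rw [hcself j x h]; exact hcself j x h
  set n := Fintype.card α with hn
  set key : α → ℕ := fun x => (Fintype.equivFin α x).val with hkey
  have hkinj : Function.Injective key := fun a b h => (Fintype.equivFin α).injective (Fin.ext h)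
  have hklt : ∀ x, key x < n := fun x => (Fintype.equivFin α x).isLt
  have hstar : ∀ j : Fin d, ∃ φ0 φ1 : α → ℕ, Function.Injective φ0 ∧ Function.Injective φ1 ∧
      ∀ x y : α, x ≠ y → ((φ0 x ≤ φ0 y ∧ φ1 x ≤ φ1 y) ↔ c j y = x) :=
    fun j => star_exists n key hkinj hklt (c j) (hcc j)
  choose Φ0 Φ1 hinj0 hinj1 hiff using hstar
  have hreal : HasBooleanRealizer α (2 * d) := by
    refine ⟨fun i x y =>
        if h : i.val < d then Φ0 ⟨i.val, h⟩ x ≤ Φ0 ⟨i.val, h⟩ y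
        else Φ1 ⟨i.val - d, by have := i.isLt; omega⟩ x ≤ Φ1 ⟨i.val - d, by have := i.isLt; omega⟩ y,
      fun v => ∃ j : Fin d, (v ⟨j.val, by have := j.isLt; omega⟩ ∧ v ⟨j.val + d, by have := j.isLt; omega⟩),
      ?_, ?_⟩
    · intro i
      dsimp only
      split
      · exact isLinearOrder_pullback _ (hinj0 _)
      · exact isLinearOrder_pullback _ (hinj1 _)
    · intro x y hxy
      dsimp only
      constructor
      · intro hlt
        have hmem : x ∈ D y := ⟨hmin hlt, hlt⟩
        have hMj : M (g y x) x y := ⟨hmem, rfl⟩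
        have h1 : c (g y x) y = x := hceq _ _ _ hMj
        have h2 := (hiff (g y x) x y hxy).mpr h1
        refine ⟨g y x, ?_, ?_⟩
        · rw [dif_pos (g y x).isLt]
          exact h2.1
        · rw [dif_neg (show ¬((g y x).val + d < d) by omega)]
          simp only [Nat.add_sub_cancel]
          exact h2.2
      · rintro ⟨j, h0, h1⟩
        rw [dif_pos j.isLt] at h0
        rw [dif_neg (show ¬(j.val + d < d) by omega)] at h1
        simp only [Nat.add_sub_cancel] at h1
        have hcj : c j y = x := (hiff j x y hxy).mp ⟨h0, h1⟩
        have hex : ∃ a, M j a y := by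
          by_contra hne
          exact hxy (hcj.symm.trans (hcself j y hne))
        have hm := hcM j y hex
        rw [hcj] at hm
        exact hm.1.2
  unfold bdim
  exact Nat.sInf_le ⟨by omega, hreal⟩
end

section
/- For each d ≥ 2 there exists n₀ such that for all n ≥ n₀, the poset P(1,d;n) of all 1-element and d-element subsets of [n] ordered by inclusion has Boolean dimension exactly 2d. -/
/-- Ramsey property: every `r`-coloring of the `k`-element subsets of an `N`-element set
admits an `h`-element set all of whose `k`-element subsets get the same color. -/
def RamseyProp (N k h r : ℕ) : Prop :=
  ∀ φ : Finset (Fin N) → Fin r, ∃ H : Finset (Fin N), H.card = h ∧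
    ∃ c : Fin r, ∀ S ⊆ H, S.card = k → φ S = c

/-- The Ramsey number `Ram(k,h;r)`. -/
noncomputable def Ram (k h r : ℕ) : ℕ := sInf {N | RamseyProp N k h r}


/-- The poset `P(1,d;n)` of all 1-element and `d`-element subsets of `[n]`,
ordered by inclusion. -/
def P1d (d n : ℕ) := {S : Finset (Fin n) // S.card = 1 ∨ S.card = d}

instance (d n : ℕ) : PartialOrder (P1d d n) := by unfold P1d; infer_instance

namespace BdimAux

open Finset

variable {d n : ℕ}

theorem P1d.le_iff (x y : P1d d n) : x ≤ y ↔ x.1 ≤ y.1 := Iff.rfl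

theorem P1d.lt_iff (x y : P1d d n) : x < y ↔ x.1 ⊂ y.1 := by
  rw [lt_iff_le_not_ge, ← Finset.lt_iff_ssubset, lt_iff_le_not_ge]
  exact Iff.rfl

theorem P1d.card_lt_of_lt {x y : P1d d n} (h : x < y) : x.1.card < y.1.card :=
  Finset.card_lt_card ((P1d.lt_iff x y).1 h)

noncomputable def code (x : P1d d n) : ℕ := Encodable.encode x.1

theorem code_inj : Function.Injective (code (d := d) (n := n)) := fun x y h =>
  Subtype.ext (Encodable.encode_injective h)

def kv (j : ℕ) (x : P1d d n) : ℕ :=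
  ((x.1.sort (· ≤ ·)).map Fin.val).getD (if x.1.card = 1 then 0 else j) 0

def flg (s : ℕ) (x : P1d d n) : ℕ := if x.1.card = 1 then s else 1 - s

noncomputable def Fm (i : ℕ) (x : P1d d n) : ℕ ×ₗ (ℕ ×ₗ ℕ) :=
  toLex (kv (i / 2) x, toLex (flg (i % 2) x, code x))

noncomputable def Brel (i : ℕ) (x y : P1d d n) : Prop := Fm i x ≤ Fm i y

theorem Brel_iff (i : ℕ) (x y : P1d d n) :
    Brel i x y ↔ kv (i / 2) x < kv (i / 2) y ∨ (kv (i / 2) x = kv (i / 2) y ∧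
      (flg (i % 2) x < flg (i % 2) y ∨ (flg (i % 2) x = flg (i % 2) y ∧ code x ≤ code y))) := by
  simp [Brel, Fm, Prod.Lex.le_iff]

theorem Fm_inj (i : ℕ) : Function.Injective (Fm (d := d) (n := n) i) := by
  intro x y h
  have h3 : code x = code y := congrArg (fun z => (ofLex (ofLex z).2).2) h
  exact code_inj h3

theorem Brel_isLinearOrder (i : ℕ) : IsLinearOrder (P1d d n) (Brel i) :=
  { refl := fun x => le_refl _
    trans := fun x y z h1 h2 => le_trans h1 h2
    antisymm := fun x y h1 h2 => Fm_inj i (le_antisymm h1 h2)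
    total := fun x y => le_total _ _ }

theorem kv_sing (j : ℕ) (x : P1d d n) (a : Fin n) (hx : x.1 = {a}) : kv j x = a.1 := by
  simp [kv, hx]

theorem flg_sing (s : ℕ) (x : P1d d n) (a : Fin n) (hx : x.1 = {a}) : flg s x = s := by
  simp [flg, hx]

theorem flg_set (hd : 2 ≤ d) (s : ℕ) (x : P1d d n) (hx : x.1.card = d) : flg s x = 1 - s := by
  have : ¬ x.1.card = 1 := by omega
  simp [flg, this]

theorem mem_iff_kv (hd : 2 ≤ d) (x : P1d d n) (hx : x.1.card = d) (a : Fin n) :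
    a ∈ x.1 ↔ ∃ j : Fin d, kv j.1 x = a.1 := by
  have hne : ¬ x.1.card = 1 := by omega
  have hlen : ((x.1.sort (· ≤ ·)).map Fin.val).length = d := by
    rw [List.length_map, Finset.length_sort, hx]
  have hkv : ∀ j : Fin d, kv j.1 x = ((x.1.sort (· ≤ ·)).map Fin.val).getD j.1 0 := by
    intro j; simp [kv, hne]
  constructor
  · intro ha
    have : a.1 ∈ (x.1.sort (· ≤ ·)).map Fin.val :=
      List.mem_map_of_mem ((Finset.mem_sort _).2 ha)
    obtain ⟨jj, hjj⟩ := List.mem_iff_get.1 this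
    refine ⟨⟨jj.1, by omega⟩, ?_⟩
    rw [hkv]
    rw [List.getD_eq_getElem _ _ (by omega)]
    simpa using hjj
  · rintro ⟨j, hj⟩
    rw [hkv, List.getD_eq_getElem _ _ (by omega)] at hj
    have : a.1 ∈ (x.1.sort (· ≤ ·)).map Fin.val := by
      rw [← hj]; exact List.getElem_mem _
    obtain ⟨b, hb1, hb2⟩ := List.mem_map.1 this
    have : b = a := Fin.val_injective hb2
    subst this
    exact (Finset.mem_sort _).1 hb1



open Function



noncomputable instance (d n : ℕ) : Fintype (P1d d n) := by unfold P1d; infer_instance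

/-- Erdős–Szekeres, proof copied from Mathlib's Archive. -/
theorem erdos_szekeres {α : Type*} [LinearOrder α] {r s n : ℕ} {f : Fin n → α} (hn : r * s < n)
    (hf : Injective f) :
    (∃ t : Finset (Fin n), r < #t ∧ StrictMonoOn f ↑t) ∨
      ∃ t : Finset (Fin n), s < #t ∧ StrictAntiOn f ↑t := by
  let inc_sequences_ending_in : Fin n → Finset (Finset (Fin n)) := fun i =>
    univ.powerset.filter fun t => Finset.max t = i ∧ StrictMonoOn f ↑t
  let dec_sequences_ending_in : Fin n → Finset (Finset (Fin n)) := fun i =>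
    univ.powerset.filter fun t => Finset.max t = i ∧ StrictAntiOn f ↑t
  have inc_i : ∀ i, {i} ∈ inc_sequences_ending_in i := fun i => by
    simp [inc_sequences_ending_in, StrictMonoOn]
  have dec_i : ∀ i, {i} ∈ dec_sequences_ending_in i := fun i => by
    simp [dec_sequences_ending_in, StrictAntiOn]
  let ab' : Fin n → ℕ × ℕ := by
    intro i
    apply
      (max' ((inc_sequences_ending_in i).image card) (Nonempty.image ⟨{i}, inc_i i⟩ _),
        max' ((dec_sequences_ending_in i).image card) (Nonempty.image ⟨{i}, dec_i i⟩ _))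
  generalize hab : ab' = ab
  rsuffices ⟨i, hi⟩ : ∃ i, r < (ab i).1 ∨ s < (ab i).2
  · refine Or.imp ?_ ?_ hi
    on_goal 1 =>
      have : (ab i).1 ∈ image card (inc_sequences_ending_in i) := by
        simp only [← hab]; exact max'_mem _ (Nonempty.image ⟨{i}, inc_i i⟩ _)
    on_goal 2 =>
      have : (ab i).2 ∈ image card (dec_sequences_ending_in i) := by
        simp only [← hab]; exact max'_mem _ (Nonempty.image ⟨{i}, dec_i i⟩ _)
    all_goals
      intro hi
      rw [mem_image] at this
      obtain ⟨t, ht₁, ht₂⟩ := this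
      refine ⟨t, by rwa [ht₂], ?_⟩
      rw [mem_filter] at ht₁
      apply ht₁.2.2
  have : Injective ab := by
    simp only [← hab]
    apply Injective.of_lt_imp_ne
    intro i j k q
    injection q with q₁ q₂
    cases lt_or_gt_of_ne fun _ => ne_of_lt ‹i < j› (hf ‹f i = f j›)
    on_goal 1 =>
      apply ne_of_lt _ q₁
      have : (ab' i).1 ∈ image card (inc_sequences_ending_in i) := by exact max'_mem _ (Nonempty.image ⟨{i}, inc_i i⟩ _)
    on_goal 2 =>
      apply ne_of_lt _ q₂
      have : (ab' i).2 ∈ image card (dec_sequences_ending_in i) := by exact max'_mem _ (Nonempty.image ⟨{i}, dec_i i⟩ _)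
    all_goals
      rw [Nat.lt_iff_add_one_le]
      apply le_max'
      rw [mem_image] at this ⊢
      rcases this with ⟨t, ht₁, ht₂⟩
      rw [mem_filter] at ht₁
      have : t.max = i := by simp only [ht₁.2.1]
      refine ⟨insert j t, ?_, ?_⟩
      · rw [mem_filter]
        refine ⟨?_, ?_, ?_⟩
        · rw [mem_powerset]; apply subset_univ
        · convert max_insert (a := j) (s := t)
          rw [ht₁.2.1, max_eq_left]
          apply WithBot.coe_le_coe.mpr (le_of_lt ‹i < j›)
        simp only [StrictMonoOn, StrictAntiOn, coe_insert, Set.mem_insert_iff, mem_coe]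
        rintro x ⟨rfl | _⟩ y ⟨rfl | _⟩ _
        · apply (irrefl _ ‹j < j›).elim
        · exfalso
          apply not_le_of_gt (_root_.trans ‹i < j› ‹j < y›) (le_max_of_eq ‹y ∈ t› ‹t.max = i›)
        · first
          | apply lt_of_le_of_lt _ ‹f i < f j›
          | apply lt_of_lt_of_le ‹f j < f i› _
          rcases lt_or_eq_of_le (le_max_of_eq ‹x ∈ t› ‹t.max = i›) with (_ | rfl)
          · apply le_of_lt (ht₁.2.2 ‹x ∈ t› (mem_of_max ‹t.max = i›) ‹x < i›)
          · rfl
        · apply ht₁.2.2 ‹x ∈ t› ‹y ∈ t› ‹x < y›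
      · rw [card_insert_of_notMem, ht₂]
        intro
        apply not_le_of_gt ‹i < j› (le_max_of_eq ‹j ∈ t› ‹t.max = i›)
  by_contra! q
  let ran : Finset (ℕ × ℕ) := (range r).image Nat.succ ×ˢ (range s).image Nat.succ
  have : image ab univ ⊆ ran := by
    rintro ⟨x₁, x₂⟩
    simp only [ran, mem_image, exists_prop, mem_range, mem_univ, mem_product, true_and,
      Prod.ext_iff]
    rintro ⟨i, rfl, rfl⟩
    specialize q i
    have z : 1 ≤ (ab i).1 ∧ 1 ≤ (ab i).2 := by
      simp only [← hab]
      constructor <;>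
        · apply le_max'
          rw [mem_image]
          exact ⟨{i}, by solve_by_elim, card_singleton i⟩
    exact ⟨⟨(ab i).1 - 1, by omega⟩, (ab i).2 - 1, by omega⟩
  apply not_le_of_gt hn
  simpa [ran, Nat.succ_injective, card_image_of_injective, ‹Injective ab›] using card_le_card this

/-- Iterated Erdős–Szekeres: simultaneously monotone subsequence for `k` sequences. -/
theorem iterES : ∀ k m : ℕ, ∃ N : ℕ, ∀ n, N ≤ n → ∀ f : Fin k → Fin n → ℕ,
    (∀ i, Injective (f i)) →
    ∃ s : Fin m → Fin n, StrictMono s ∧ ∀ i, StrictMono (f i ∘ s) ∨ StrictAnti (f i ∘ s) := by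
  intro k
  induction k with
  | zero =>
    intro m
    refine ⟨m, fun n hn f _ => ⟨fun a => Fin.castLE hn a, fun a b h => h, fun i => i.elim0⟩⟩
  | succ k ih =>
    intro m
    obtain ⟨N', hN'⟩ := ih m
    refine ⟨N' * N' + 1, ?_⟩
    intro n hn f hf
    rcases erdos_szekeres (r := N') (s := N') (f := f (Fin.last k)) (by omega) (hf _) with
      ⟨t, htc, htm⟩ | ⟨t, htc, htm⟩ <;>
    · obtain ⟨t', ht's, ht'c⟩ := Finset.exists_subset_card_eq (le_of_lt htc)
      set e := t'.orderEmbOfFin ht'c with he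
      have hemem : ∀ a, e a ∈ t := fun a => ht's (t'.orderEmbOfFin_mem ht'c a)
      obtain ⟨s', hs'mono, hs'⟩ := hN' N' le_rfl (fun i a => f i.castSucc (e a))
        (fun i => (hf _).comp e.injective)
      refine ⟨fun a => e (s' a), (e.strictMono.comp hs'mono : _), ?_⟩
      intro i
      refine Fin.lastCases ?_ ?_ i
      · first
        | exact Or.inl (fun a b hab =>
            htm (Finset.mem_coe.2 (hemem _)) (Finset.mem_coe.2 (hemem _))
              (e.strictMono (hs'mono hab)))
        | exact Or.inr (fun a b hab =>
            htm (Finset.mem_coe.2 (hemem _)) (Finset.mem_coe.2 (hemem _))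
              (e.strictMono (hs'mono hab)))
      · intro j
        exact hs' j

theorem lower (hd : 2 ≤ d) (k : ℕ) (hk : k < 2 * d) (N : ℕ)
    (hN : ∀ n', N ≤ n' → ∀ f : Fin k → Fin n' → ℕ, (∀ i, Injective (f i)) →
      ∃ s : Fin (2 * d + 1) → Fin n', StrictMono s ∧
        ∀ i, StrictMono (f i ∘ s) ∨ StrictAnti (f i ∘ s))
    (hn : N ≤ n) : ¬ HasBooleanRealizer (P1d d n) k := by
  classical
  rintro ⟨B, τ, hlin, hiff⟩
  haveI : ∀ i, IsLinearOrder (P1d d n) (B i) := hlin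
  set sing : Fin n → P1d d n := fun a => ⟨{a}, Or.inl (Finset.card_singleton a)⟩ with hsing
  set rank : Fin k → P1d d n → ℕ :=
    fun i x => (Finset.univ.filter (fun y => B i y x)).card with hrank
  have hBle : ∀ i (x y : P1d d n), B i x y → rank i x ≤ rank i y := by
    intro i x y h
    apply Finset.card_le_card
    intro z hz
    rw [Finset.mem_filter] at hz ⊢
    exact ⟨hz.1, _root_.trans_of (B i) hz.2 h⟩
  have hBlt : ∀ i (x y : P1d d n), x ≠ y → B i x y → rank i x < rank i y := by
    intro i x y hne h
    apply Finset.card_lt_card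
    constructor
    · intro z hz
      rw [Finset.mem_filter] at hz ⊢
      exact ⟨hz.1, _root_.trans_of (B i) hz.2 h⟩
    · intro hsub
      have hy : y ∈ Finset.univ.filter (fun z => B i z y) := by
        rw [Finset.mem_filter]
        exact ⟨Finset.mem_univ _, _root_.refl_of (B i) y⟩
      have := hsub hy
      rw [Finset.mem_filter] at this
      exact hne (_root_.antisymm h this.2)
  have hsinginj : Injective sing := by
    intro a b h
    have : ({a} : Finset (Fin n)) = {b} := congrArg Subtype.val h
    simpa using this
  have hfinj : ∀ i, Injective (fun a => rank i (sing a)) := by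
    intro i a b h
    by_contra hne
    have hs : sing a ≠ sing b := fun hh => hne (hsinginj hh)
    rcases _root_.total_of (B i) (sing a) (sing b) with hab | hba
    · exact absurd h (Nat.ne_of_lt (hBlt i _ _ hs hab))
    · exact absurd h.symm (Nat.ne_of_lt (hBlt i _ _ hs.symm hba))
  obtain ⟨s, hsmono, hsi⟩ := hN n hn (fun i a => rank i (sing a)) hfinj
  -- the d-set consisting of the odd-indexed points
  have hjlt : ∀ j : Fin d, 2 * j.1 + 1 < 2 * d + 1 := fun j => by omega
  set S : Finset (Fin n) := Finset.image (fun j : Fin d => s ⟨2 * j.1 + 1, hjlt j⟩) Finset.univ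
    with hS
  have hjinj : Injective (fun j : Fin d => s ⟨2 * j.1 + 1, hjlt j⟩) := by
    intro a b h
    have := hsmono.injective h
    have : 2 * a.1 + 1 = 2 * b.1 + 1 := congrArg Fin.val this
    exact Fin.ext (by omega)
  have hScard : S.card = d := by
    rw [hS, Finset.card_image_of_injective _ hjinj, Finset.card_univ, Fintype.card_fin]
  set Sel : P1d d n := ⟨S, Or.inr hScard⟩ with hSel
  have hmem : ∀ t : Fin (2 * d + 1), s t ∈ S ↔ t.1 % 2 = 1 := by
    intro t
    rw [hS]
    simp only [Finset.mem_image, Finset.mem_univ, true_and]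
    constructor
    · rintro ⟨j, hj⟩
      have := congrArg Fin.val (hsmono.injective hj)
      simp only at this
      omega
    · intro h
      refine ⟨⟨t.1 / 2, by omega⟩, ?_⟩
      congr 1
      exact Fin.ext (by simp; omega)
  have hne : ∀ t : Fin (2 * d + 1), sing (s t) ≠ Sel := by
    intro t h
    have := congrArg (fun z : P1d d n => z.1.card) h
    simp only [hsing, hSel, Finset.card_singleton, hScard] at this
    omega
  have hlt : ∀ t : Fin (2 * d + 1), sing (s t) < Sel ↔ s t ∈ S := by
    intro t
    rw [P1d.lt_iff]
    constructor
    · intro h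
      exact h.1 (Finset.mem_singleton_self _)
    · intro h
      refine Finset.ssubset_iff_subset_ne.2 ⟨Finset.singleton_subset_iff.2 h, ?_⟩
      intro hh
      have := congrArg Finset.card hh
      rw [Finset.card_singleton, hScard] at this
      omega
  set q : Fin (2 * d + 1) → Fin k → Prop := fun t i => B i (sing (s t)) Sel with hq
  have hv : ∀ t, τ (q t) ↔ t.1 % 2 = 1 := by
    intro t
    exact ((hiff _ _ (hne t)).symm.trans ((hlt t).trans (hmem t)))
  have hmono : ∀ i, (∀ u w : Fin (2 * d + 1), u ≤ w → B i (sing (s u)) (sing (s w))) ∨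
      (∀ u w : Fin (2 * d + 1), u ≤ w → B i (sing (s w)) (sing (s u))) := by
    intro i
    rcases hsi i with h | h
    · left
      intro u w huw
      rcases eq_or_lt_of_le huw with rfl | hlt'
      · exact _root_.refl_of (B i) _
      · have hr : rank i (sing (s u)) < rank i (sing (s w)) := h hlt'
        rcases _root_.total_of (B i) (sing (s u)) (sing (s w)) with hh | hh
        · exact hh
        · exact absurd (hBle i _ _ hh) (by omega)
    · right
      intro u w huw
      rcases eq_or_lt_of_le huw with rfl | hlt'
      · exact _root_.refl_of (B i) _
      · have hr : rank i (sing (s w)) < rank i (sing (s u)) := h hlt'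
        rcases _root_.total_of (B i) (sing (s w)) (sing (s u)) with hh | hh
        · exact hh
        · exact absurd (hBle i _ _ hh) (by omega)
  have ht0 : ∀ t : Fin (2 * d), t.1 < 2 * d + 1 := fun t => by omega
  have ht1 : ∀ t : Fin (2 * d), t.1 + 1 < 2 * d + 1 := fun t => by omega
  have hflip : ∀ t : Fin (2 * d), ∃ i, ¬ (q ⟨t.1, ht0 t⟩ i ↔ q ⟨t.1 + 1, ht1 t⟩ i) := by
    intro t
    by_contra hcon
    push_neg at hcon
    have : q ⟨t.1, ht0 t⟩ = q ⟨t.1 + 1, ht1 t⟩ := by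
      funext i
      exact propext (hcon i)
    have h0 := hv ⟨t.1, ht0 t⟩
    have h1 := hv ⟨t.1 + 1, ht1 t⟩
    rw [this] at h0
    have h2 := h0.symm.trans h1
    simp only at h2
    omega
  choose I hI using hflip
  have hinj : ∀ t t' : Fin (2 * d), t.1 < t'.1 → I t ≠ I t' := by
    intro t t' htt heq
    set i := I t with hi
    have h1 := hI t
    have h2 := hI t'
    rw [← heq] at h2
    rcases hmono i with hmc | hmc
    · -- q ·  i is downward closed in the index
      have hdc : ∀ u w : Fin (2 * d + 1), u ≤ w → q w i → q u i := by
        intro u w huw hw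
        exact _root_.trans_of (B i) (hmc u w huw) hw
      have ha : q ⟨t.1, ht0 t⟩ i ∧ ¬ q ⟨t.1 + 1, ht1 t⟩ i := by
        by_cases hA : q ⟨t.1, ht0 t⟩ i <;> by_cases hB : q ⟨t.1 + 1, ht1 t⟩ i
        · exact absurd (iff_of_true hA hB) h1
        · exact ⟨hA, hB⟩
        · exact absurd (hdc _ _ (Fin.mk_le_mk.2 (by omega)) hB) hA
        · exact absurd (iff_of_false hA hB) h1
      have hb : q ⟨t'.1, ht0 t'⟩ i ∧ ¬ q ⟨t'.1 + 1, ht1 t'⟩ i := by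
        by_cases hA : q ⟨t'.1, ht0 t'⟩ i <;> by_cases hB : q ⟨t'.1 + 1, ht1 t'⟩ i
        · exact absurd (iff_of_true hA hB) h2
        · exact ⟨hA, hB⟩
        · exact absurd (hdc _ _ (Fin.mk_le_mk.2 (by omega)) hB) hA
        · exact absurd (iff_of_false hA hB) h2
      exact ha.2 (hdc ⟨t.1 + 1, ht1 t⟩ ⟨t'.1, ht0 t'⟩ (Fin.mk_le_mk.2 (by omega)) hb.1)
    · have huc : ∀ u w : Fin (2 * d + 1), u ≤ w → q u i → q w i := by
        intro u w huw hu
        exact _root_.trans_of (B i) (hmc u w huw) hu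
      have ha : ¬ q ⟨t.1, ht0 t⟩ i ∧ q ⟨t.1 + 1, ht1 t⟩ i := by
        by_cases hA : q ⟨t.1, ht0 t⟩ i <;> by_cases hB : q ⟨t.1 + 1, ht1 t⟩ i
        · exact absurd (iff_of_true hA hB) h1
        · exact absurd (huc _ _ (Fin.mk_le_mk.2 (by omega)) hA) hB
        · exact ⟨hA, hB⟩
        · exact absurd (iff_of_false hA hB) h1
      have hb : ¬ q ⟨t'.1, ht0 t'⟩ i ∧ q ⟨t'.1 + 1, ht1 t'⟩ i := by
        by_cases hA : q ⟨t'.1, ht0 t'⟩ i <;> by_cases hB : q ⟨t'.1 + 1, ht1 t'⟩ i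
        · exact absurd (iff_of_true hA hB) h2
        · exact absurd (huc _ _ (Fin.mk_le_mk.2 (by omega)) hA) hB
        · exact ⟨hA, hB⟩
        · exact absurd (iff_of_false hA hB) h2
      exact hb.1 (huc ⟨t.1 + 1, ht1 t⟩ ⟨t'.1, ht0 t'⟩ (Fin.mk_le_mk.2 (by omega)) ha.2)
  have hInj : Injective I := by
    intro t t' h
    by_contra hne'
    rcases Nat.lt_or_ge t.1 t'.1 with hlt' | hge
    · exact hinj t t' hlt' h
    · have : t'.1 < t.1 := by
        rcases Nat.lt_or_ge t'.1 t.1 with h' | h'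
        · exact h'
        · exact absurd (Fin.ext (le_antisymm h' hge : t.1 = t'.1)) hne'
      exact hinj t' t this h.symm
  have := Fintype.card_le_of_injective I hInj
  simp only [Fintype.card_fin] at this
  omega

theorem upper (hd : 2 ≤ d) : HasBooleanRealizer (P1d d n) (2 * d) := by
  refine ⟨fun i => Brel i.1,
    fun q => ∃ j : Fin d, q ⟨2 * j.1, by omega⟩ ∧ ¬ q ⟨2 * j.1 + 1, by omega⟩,
    fun i => Brel_isLinearOrder i.1, ?_⟩
  intro x y hxy
  have hdiv0 : ∀ j : Fin d, (2 * j.1) / 2 = j.1 := fun j => by omega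
  have hdiv1 : ∀ j : Fin d, (2 * j.1 + 1) / 2 = j.1 := fun j => by omega
  have hmod0 : ∀ j : Fin d, (2 * j.1) % 2 = 0 := fun j => by omega
  have hmod1 : ∀ j : Fin d, (2 * j.1 + 1) % 2 = 1 := fun j => by omega
  rcases x.2 with hx | hx <;> rcases y.2 with hy | hy
  · -- singleton / singleton
    obtain ⟨a, ha⟩ := Finset.card_eq_one.1 hx
    obtain ⟨b, hb⟩ := Finset.card_eq_one.1 hy
    have hab : a.1 ≠ b.1 := by
      intro h
      exact hxy (Subtype.ext (by rw [ha, hb, Fin.val_injective h]))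
    constructor
    · intro h
      have := P1d.card_lt_of_lt h; omega
    · rintro ⟨j, h0, h1⟩
      dsimp only at h0 h1
      rw [Brel_iff, hdiv0, hmod0, kv_sing _ _ _ ha, kv_sing _ _ _ hb,
        flg_sing _ _ _ ha, flg_sing _ _ _ hb] at h0
      rw [Brel_iff, hdiv1, hmod1, kv_sing _ _ _ ha, kv_sing _ _ _ hb,
        flg_sing _ _ _ ha, flg_sing _ _ _ hb] at h1
      exact absurd h0 (by push_neg at h1 ⊢; omega)
  · -- singleton / set
    obtain ⟨a, ha⟩ := Finset.card_eq_one.1 hx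
    have key : ∀ j : Fin d,
        (Brel (2 * j.1) x y ∧ ¬ Brel (2 * j.1 + 1) x y) ↔ kv j.1 y = a.1 := by
      intro j
      rw [Brel_iff, Brel_iff, hdiv0, hdiv1, hmod0, hmod1, kv_sing _ _ _ ha,
        flg_sing _ _ _ ha, flg_sing _ _ _ ha, flg_set hd _ _ hy, flg_set hd _ _ hy]
      constructor
      · rintro ⟨h0, h1⟩
        push_neg at h1
        omega
      · intro h
        constructor
        · right; exact ⟨h.symm, Or.inl (by omega)⟩
        · push_neg; omega
    constructor
    · intro h
      have hmem : a ∈ y.1 := by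
        have := (P1d.lt_iff x y).1 h
        have hs : x.1 ⊆ y.1 := this.1
        rw [ha] at hs
        exact hs (Finset.mem_singleton_self a)
      obtain ⟨j, hj⟩ := (mem_iff_kv hd y hy a).1 hmem
      exact ⟨j, (key j).2 hj⟩
    · rintro ⟨j, hj⟩
      have hmem : a ∈ y.1 := (mem_iff_kv hd y hy a).2 ⟨j, (key j).1 hj⟩
      rw [P1d.lt_iff, ha]
      refine Finset.ssubset_iff_subset_ne.2 ⟨Finset.singleton_subset_iff.2 hmem, ?_⟩
      intro h
      rw [← h] at hy
      simp at hy
      omega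
  · -- set / singleton
    obtain ⟨b, hb⟩ := Finset.card_eq_one.1 hy
    constructor
    · intro h
      have := P1d.card_lt_of_lt h
      omega
    · rintro ⟨j, h0, h1⟩
      dsimp only at h0 h1
      rw [Brel_iff, hdiv0, hmod0, kv_sing _ _ _ hb, flg_sing _ _ _ hb, flg_set hd _ _ hx] at h0
      rw [Brel_iff, hdiv1, hmod1, kv_sing _ _ _ hb, flg_sing _ _ _ hb, flg_set hd _ _ hx] at h1
      push_neg at h1
      omega
  · -- set / set
    constructor
    · intro h
      have := P1d.card_lt_of_lt h
      omega
    · rintro ⟨j, h0, h1⟩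
      dsimp only at h0 h1
      rw [Brel_iff, hdiv0, hmod0, flg_set hd _ _ hx, flg_set hd _ _ hy] at h0
      rw [Brel_iff, hdiv1, hmod1, flg_set hd _ _ hx, flg_set hd _ _ hy] at h1
      push_neg at h1
      omega


end BdimAux

/-- For each `d ≥ 2` there is `n₀` such that `bdim P(1,d;n) = 2d` for all `n ≥ n₀`. -/
theorem bdim_P1d_eq (d : ℕ) (hd : 2 ≤ d) :
    ∃ n₀ : ℕ, ∀ n : ℕ, n₀ ≤ n → bdim (P1d d n) = 2 * d := by
  have hES := fun k : ℕ => BdimAux.iterES k (2 * d + 1)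
  choose N hN using hES
  refine ⟨(Finset.range (2 * d)).sup N, ?_⟩
  intro n hn
  have hub : (2 * d) ∈ {j | 0 < j ∧ HasBooleanRealizer (P1d d n) j} :=
    ⟨by omega, BdimAux.upper hd⟩
  rw [bdim]
  refine le_antisymm (Nat.sInf_le hub) (le_csInf ⟨_, hub⟩ ?_)
  rintro j ⟨hjpos, hjB⟩
  by_contra hcon
  push_neg at hcon
  exact BdimAux.lower hd j hcon (N j) (hN j)
    (le_trans (Finset.le_sup (Finset.mem_range.2 hcon)) hn) hjB
end

section
/- Splitting inequality for dimension: if Q is the split of a finite poset P, then dim(P) ≤ dim(Q) ≤ 1 + dim(P). -/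
/-- The split of a poset `α`: `(false, x)` is the minimal element `x'`,
`(true, y)` is the maximal element `y''`, and `x' < y''` iff `x ≤ y` in `α`. -/
def Split (α : Type*) := Bool × α

instance (α : Type*) [PartialOrder α] : PartialOrder (Split α) where
  le p q := p = q ∨ (p.1 = false ∧ q.1 = true ∧ p.2 ≤ q.2)
  le_refl p := Or.inl rfl
  le_trans := by
    rintro p q r (rfl | ⟨h1, h2, h3⟩) h
    · exact h
    · rcases h with rfl | ⟨g1, g2, g3⟩
      · exact Or.inr ⟨h1, h2, h3⟩
      · rw [h2] at g1; exact absurd g1 (by simp)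
  le_antisymm := by
    rintro p q (rfl | ⟨h1, h2, h3⟩) h
    · rfl
    · rcases h with rfl | ⟨g1, g2, g3⟩
      · rfl
      · rw [h2] at g1; exact absurd g1 (by simp)



set_option linter.unusedSectionVars false
set_option linter.unusedVariables false

section Helpers
variable {α : Type*} [PartialOrder α]

lemma exists_linExt : ∃ s : α → α → Prop, IsLinearOrder α s ∧ ∀ x y : α, x ≤ y → s x y := by
  obtain ⟨s, hs, hsub⟩ := extend_partialOrder ((· ≤ ·) : α → α → Prop)
  exact ⟨s, hs, fun x y h => hsub x y h⟩

lemma exists_linExt_rev {a b : α} (h1 : ¬ a ≤ b) :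
    ∃ s : α → α → Prop, (IsLinearOrder α s ∧ ∀ x y : α, x ≤ y → s x y) ∧ s b a := by
  classical
  set C : α → α → Prop := fun x y => x ≤ y ∨ (x ≤ b ∧ a ≤ y) with hC
  haveI hpo : IsPartialOrder α C := by
    refine { refl := fun x => Or.inl le_rfl, trans := ?_, antisymm := ?_ }
    · rintro x y z (hxy | ⟨hxb, hay⟩) (hyz | ⟨hyb, haz⟩)
      · exact Or.inl (hxy.trans hyz)
      · exact Or.inr ⟨hxy.trans hyb, haz⟩
      · exact Or.inr ⟨hxb, hay.trans hyz⟩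
      · exact Or.inr ⟨hxb, haz⟩
    · rintro x y (hxy | ⟨hxb, hay⟩) (hyx | ⟨hyb, hax⟩)
      · exact le_antisymm hxy hyx
      · exact absurd ((hax.trans hxy).trans hyb) h1
      · exact absurd ((hay.trans hyx).trans hxb) h1
      · exact absurd (hax.trans hxb) h1
  obtain ⟨s, hs, hsub⟩ := extend_partialOrder C
  exact ⟨s, ⟨hs, fun x y h => hsub x y (Or.inl h)⟩, hsub b a (Or.inr ⟨le_rfl, le_rfl⟩)⟩

lemma hasRealizer_exists (α : Type*) [PartialOrder α] [Fintype α] :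
    HasRealizer α (Fintype.card (α × α) + 1) := by
  classical
  set n := Fintype.card (α × α) with hn
  let e : (α × α) ≃ Fin n := Fintype.equivFin (α × α)
  -- a linear order attached to each pair
  have hpick : ∀ p : α × α, ∃ s : α → α → Prop,
      (IsLinearOrder α s ∧ ∀ x y : α, x ≤ y → s x y) ∧
      (¬ p.1 ≤ p.2 → s p.2 p.1) := by
    intro p
    by_cases h : ¬ p.1 ≤ p.2
    · obtain ⟨s, hs, hrev⟩ := exists_linExt_rev (a := p.1) (b := p.2) h
      exact ⟨s, hs, fun _ => hrev⟩
    · obtain ⟨s, hs1, hs2⟩ := exists_linExt (α := α)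
      exact ⟨s, ⟨hs1, hs2⟩, fun hh => absurd h (by simpa using hh)⟩
  choose pick hpick1 hpick2 using hpick
  obtain ⟨s0, hs01, hs02⟩ := exists_linExt (α := α)
  refine ⟨fun i => if h : (i : ℕ) < n then pick (e.symm ⟨i, h⟩) else s0, fun i => ?_, ?_⟩
  · by_cases h : (i : ℕ) < n
    · simpa [h, IsLinearExtension] using hpick1 (e.symm ⟨i, h⟩)
    · simpa [h, IsLinearExtension] using (⟨hs01, hs02⟩ : IsLinearExtension s0)
  · intro x y hxy
    by_contra hxyle
    by_cases hyx : y ≤ x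
    · have h0 := hxy ⟨n, Nat.lt_succ_self n⟩
      simp only [Fin.val_mk, lt_irrefl, dif_neg] at h0
      haveI : IsLinearOrder α s0 := hs01
      exact hxyle (le_of_eq (antisymm_of s0 h0 (hs02 _ _ hyx)))
    · -- incomparable pair, reversed in its own order
      set i : Fin (n + 1) := ⟨(e (x, y) : ℕ), (e (x, y)).isLt.trans (Nat.lt_succ_self n)⟩
      have hi : (i : ℕ) < n := (e (x, y)).isLt
      have h0 := hxy i
      simp only [] at h0
      rw [dif_pos (e (x, y)).isLt] at h0
      have he : e.symm ⟨((e (x, y) : Fin n) : ℕ), (e (x, y)).isLt⟩ = (x, y) := by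
        simp
      rw [he] at h0
      have hrev := hpick2 (x, y) hxyle
      haveI := (hpick1 (x, y)).1
      have := antisymm_of (pick (x, y)) h0 hrev
      exact hxyle (le_of_eq this)
end Helpers

def pr {α : Type*} (x : α) : Split α := (false, x)
def db {α : Type*} (x : α) : Split α := (true, x)

section Split
variable {α : Type*} [PartialOrder α]

lemma pr_le_db {x y : α} (h : x ≤ y) : pr x ≤ db y := Or.inr ⟨rfl, rfl, h⟩

lemma pr_le_db_iff {x y : α} : (pr x ≤ db y) ↔ x ≤ y := by
  constructor
  · rintro (h | ⟨-, -, h⟩)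
    · exact absurd (congrArg Prod.fst h) (by simp [pr, db])
    · exact h
  · exact pr_le_db

lemma hasRealizer_of_split {d : ℕ} (h : HasRealizer (Split α) d) :
    HasRealizer α d := by
  classical
  obtain ⟨M, hM, hInt⟩ := h
  have key : ∀ i : Fin d, ∃ s : α → α → Prop,
      (IsLinearOrder α s ∧ ∀ x y : α, x ≤ y → s x y) ∧
      (∀ x y : α, M i (db x) (pr y) → s x y) := by
    intro i
    haveI hMi : IsLinearOrder (Split α) (M i) := (hM i).1
    have hext : ∀ p q : Split α, p ≤ q → M i p q := (hM i).2
    have mtrans : ∀ {p q r : Split α}, M i p q → M i q r → M i p r :=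
      fun hpq hqr => trans_of (M i) hpq hqr
    set Base : α → α → Prop :=
      fun x y => x ≤ y ∨ M i (db x) (pr y) with hBase
    set C : α → α → Prop := fun x y => Relation.ReflTransGen Base x y with hCdef
    -- the invariant
    have phi : ∀ a b : α, C a b →
        a ≤ b ∨ ∃ u w : α, a ≤ u ∧ M i (db u) (pr w) ∧ w ≤ b := by
      intro a b hab
      induction hab using Relation.ReflTransGen.head_induction_on with
      | refl => exact Or.inl le_rfl
      | head hstep _ ih =>
        rename_i a' c' _
        rcases hstep with hle | hS
        · rcases ih with hcb | ⟨u, w, hcu, hM', hwb⟩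
          · exact Or.inl (hle.trans hcb)
          · exact Or.inr ⟨u, w, hle.trans hcu, hM', hwb⟩
        · rcases ih with hcb | ⟨u, w, hcu, hM', hwb⟩
          · exact Or.inr ⟨a', c', le_rfl, hS, hcb⟩
          · have h1 : M i (pr c') (db u) := hext _ _ (pr_le_db hcu)
            exact Or.inr ⟨a', w, le_rfl, mtrans (mtrans hS h1) hM', hwb⟩
    have hanti : ∀ a b : α, C a b → C b a → a = b := by
      intro a b hab hba
      rcases phi a b hab with h1 | ⟨u, w, hau, hM1, hwb⟩ <;>
        rcases phi b a hba with h2 | ⟨v, z, hbv, hM2, hza⟩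
      · exact le_antisymm h1 h2
      · -- a ≤ b,  b ≤ v, M v'' z', z ≤ a
        have : M i (pr z) (db v) :=
          hext _ _ (pr_le_db ((hza.trans h1).trans hbv))
        have := antisymm_of (M i) hM2 this
        exact absurd (congrArg Prod.fst this) (by simp [pr, db])
      · have : M i (pr w) (db u) :=
          hext _ _ (pr_le_db ((hwb.trans h2).trans hau))
        have := antisymm_of (M i) hM1 this
        exact absurd (congrArg Prod.fst this) (by simp [pr, db])
      · have hwv : M i (pr w) (db v) :=
          hext _ _ (pr_le_db (hwb.trans hbv))
        have hzu : M i (pr z) (db u) :=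
          hext _ _ (pr_le_db (hza.trans hau))
        have : M i (pr w) (db u) := mtrans (mtrans hwv hM2) hzu
        have := antisymm_of (M i) hM1 this
        exact absurd (congrArg Prod.fst this) (by simp [pr, db])
    haveI hpo : IsPartialOrder α C := by
      refine { refl := fun x => Relation.ReflTransGen.refl,
               trans := fun x y z h1 h2 => Relation.ReflTransGen.trans h1 h2,
               antisymm := hanti }
    obtain ⟨s, hs, hsub⟩ := extend_partialOrder C
    refine ⟨s, ⟨hs, fun x y hxy => hsub x y (Relation.ReflTransGen.single (Or.inl hxy))⟩,
      fun x y hMxy => hsub x y (Relation.ReflTransGen.single (Or.inr hMxy))⟩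
  choose s hs1 hs2 using key
  refine ⟨s, fun i => (hs1 i), ?_⟩
  intro x y hxy
  by_contra hxyle
  have h1 : ¬ (pr x ≤ db y) := fun h => hxyle (pr_le_db_iff.mp h)
  have h2 : ¬ ∀ i, M i (pr x) (db y) := fun h => h1 (hInt _ _ h)
  push_neg at h2
  obtain ⟨i, hi⟩ := h2
  haveI hMi : IsLinearOrder (Split α) (M i) := (hM i).1
  have htot := total_of (M i) (pr x) (db y)
  have hMyx : M i (db y) (pr x) := htot.resolve_left hi
  have hs_yx : s i y x := hs2 i y x hMyx
  have hs_xy : s i x y := hxy i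
  haveI := (hs1 i).1
  exact hxyle (le_of_eq (antisymm_of (s i) hs_xy hs_yx))

end Split

section Upper
variable {α : Type*} [PartialOrder α]

lemma split_ext {p q : Split α} (h1 : p.1 = q.1) (h2 : p.2 = q.2) : p = q :=
  Prod.ext h1 h2

lemma hasRealizer_split {d : ℕ} (hd : 0 < d) (h : HasRealizer α d) :
    HasRealizer (Split α) (d + 1) := by
  classical
  obtain ⟨L, hL, hInt⟩ := h
  set L0 : α → α → Prop := L ⟨0, hd⟩ with hL0
  haveI hL0lin : IsLinearOrder α L0 := (hL ⟨0, hd⟩).1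
  have hL0ext : ∀ x y : α, x ≤ y → L0 x y := (hL ⟨0, hd⟩).2
  set M0 : Split α → Split α → Prop :=
    fun p q => (p.1 = q.1 ∧ L0 q.2 p.2) ∨ (p.1 = false ∧ q.1 = true) with hM0
  set Ml : Fin d → Split α → Split α → Prop :=
    fun i p q => L i p.2 q.2 ∧ (p.2 = q.2 → p.1 ≤ q.1) with hMl
  have hM0lin : IsLinearExtension M0 := by
    constructor
    · refine { refl := fun p => Or.inl ⟨rfl, refl_of L0 p.2⟩, trans := ?_,
               antisymm := ?_, total := ?_ }
      · rintro p q r (⟨h1, h2⟩ | ⟨h1, h2⟩) (⟨g1, g2⟩ | ⟨g1, g2⟩)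
        · exact Or.inl ⟨h1.trans g1, trans_of L0 g2 h2⟩
        · exact Or.inr ⟨h1.trans g1, g2⟩
        · exact Or.inr ⟨h1, g1 ▸ h2⟩
        · rw [h2] at g1; exact absurd g1 (by simp)
      · rintro p q (⟨h1, h2⟩ | ⟨h1, h2⟩) (⟨g1, g2⟩ | ⟨g1, g2⟩)
        · exact split_ext h1 (antisymm_of L0 g2 h2)
        · rw [h1] at g2; rw [g1] at g2; exact absurd g2 (by simp)
        · rw [g1] at h2; rw [h1] at h2; exact absurd h2 (by simp)
        · rw [h2] at g1; exact absurd g1 (by simp)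
      · intro p q
        by_cases hb : p.1 = q.1
        · rcases total_of L0 p.2 q.2 with h | h
          · exact Or.inr (Or.inl ⟨hb.symm, h⟩)
          · exact Or.inl (Or.inl ⟨hb, h⟩)
        · cases hp : p.1 <;> cases hq : q.1
          · exact absurd (hp.trans hq.symm) hb
          · exact Or.inl (Or.inr ⟨hp, hq⟩)
          · exact Or.inr (Or.inr ⟨hq, hp⟩)
          · exact absurd (hp.trans hq.symm) hb
    · rintro p q (rfl | ⟨h1, h2, h3⟩)
      · exact Or.inl ⟨rfl, refl_of L0 p.2⟩
      · exact Or.inr ⟨h1, h2⟩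
  have hMllin : ∀ i, IsLinearExtension (Ml i) := by
    intro i
    haveI hi : IsLinearOrder α (L i) := (hL i).1
    have hie : ∀ x y : α, x ≤ y → L i x y := (hL i).2
    constructor
    · refine { refl := fun p => ⟨refl_of (L i) p.2, fun _ => le_rfl⟩, trans := ?_,
               antisymm := ?_, total := ?_ }
      · rintro p q r ⟨h1, h2⟩ ⟨g1, g2⟩
        refine ⟨trans_of (L i) h1 g1, fun hpr => ?_⟩
        have hqz : q.2 = r.2 := antisymm_of (L i) (hpr ▸ g1 : L i q.2 r.2) ((hpr ▸ h1 : L i r.2 q.2))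
        have hpq : p.2 = q.2 := hpr.trans hqz.symm
        exact (h2 hpq).trans (g2 hqz)
      · rintro p q ⟨h1, h2⟩ ⟨g1, g2⟩
        have h3 : p.2 = q.2 := antisymm_of (L i) h1 g1
        exact split_ext (le_antisymm (h2 h3) (g2 h3.symm)) h3
      · intro p q
        by_cases hpq : p.2 = q.2
        · rcases le_total p.1 q.1 with h | h
          · exact Or.inl ⟨hpq ▸ refl_of (L i) p.2, fun _ => h⟩
          · exact Or.inr ⟨hpq ▸ refl_of (L i) p.2, fun _ => h⟩
        · rcases total_of (L i) p.2 q.2 with h | h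
          · exact Or.inl ⟨h, fun hh => absurd hh hpq⟩
          · exact Or.inr ⟨h, fun hh => absurd hh (fun e => hpq e.symm)⟩
    · rintro p q (rfl | ⟨h1, h2, h3⟩)
      · exact ⟨refl_of (L i) p.2, fun _ => le_rfl⟩
      · exact ⟨hie _ _ h3, fun _ => by rw [h1, h2]; exact Bool.false_le true⟩
  refine ⟨Fin.cases M0 Ml, fun j => ?_, ?_⟩
  · refine Fin.cases ?_ ?_ j
    · exact hM0lin
    · exact hMllin
  · intro p q hpq
    have h0 : M0 p q := by simpa using hpq 0
    have hml : ∀ i : Fin d, Ml i p q := fun i => by simpa using hpq i.succ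
    have hle2 : p.2 ≤ q.2 := hInt p.2 q.2 (fun i => (hml i).1)
    rcases h0 with ⟨h1, h2⟩ | ⟨h1, h2⟩
    · have h22 : p.2 = q.2 := antisymm_of L0 (hL0ext _ _ hle2) h2
      exact Or.inl (split_ext h1 h22)
    · exact Or.inr ⟨h1, h2, hle2⟩

end Upper

/-- Splitting inequality for dimension: `dim P ≤ dim Q ≤ 1 + dim P`
where `Q` is the split of `P`. -/
theorem dim_split (α : Type*) [Fintype α] [PartialOrder α] :
    dimDM α ≤ dimDM (Split α) ∧ dimDM (Split α) ≤ 1 + dimDM α := by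
  have hPmem : dimDM α ∈ {d | 0 < d ∧ HasRealizer α d} :=
    Nat.sInf_mem ⟨Fintype.card (α × α) + 1, Nat.succ_pos _, hasRealizer_exists α⟩
  obtain ⟨hdP, hRP⟩ := hPmem
  have hQup : HasRealizer (Split α) (dimDM α + 1) := hasRealizer_split hdP hRP
  have hQmemset : (dimDM α + 1) ∈ {d | 0 < d ∧ HasRealizer (Split α) d} :=
    ⟨Nat.succ_pos _, hQup⟩
  have h2 : dimDM (Split α) ≤ 1 + dimDM α := by
    rw [Nat.add_comm]
    exact Nat.sInf_le hQmemset
  have hQmem : dimDM (Split α) ∈ {d | 0 < d ∧ HasRealizer (Split α) d} :=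
    Nat.sInf_mem ⟨dimDM α + 1, hQmemset⟩
  have h1 : dimDM α ≤ dimDM (Split α) :=
    Nat.sInf_le ⟨hQmem.1, hasRealizer_of_split hQmem.2⟩
  exact ⟨h1, h2⟩
end

section
/- If a finite poset P is disconnected with components C_1,…,C_t (t ≥ 2), then ldim(P) ≤ 2 + max_i ldim(C_i). -/
/-- The cover graph of a poset: vertices are the elements, with an edge between `x`
and `y` when one covers the other. -/
def coverGraph (α : Type*) [PartialOrder α] : SimpleGraph α :=
  SimpleGraph.fromRel (· ⋖ ·)

lemma reachable_of_le {β : Type*} [Finite β] [PartialOrder β] (y : β) :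
    ∀ x : β, x ≤ y → (coverGraph β).Reachable x y := by
  intro x
  induction x using WellFoundedGT.induction with
  | _ x ih =>
    intro hxy
    rcases eq_or_lt_of_le hxy with rfl | hlt
    · exact SimpleGraph.Reachable.refl _
    · obtain ⟨z, hxz, hzy⟩ := exists_covBy_le_of_lt hlt
      exact (SimpleGraph.Adj.reachable
        ((SimpleGraph.fromRel_adj _ _ _).2 ⟨hxz.lt.ne, Or.inl hxz⟩)).trans (ih z hxz.lt hzy)

lemma exists_reversal {β : Type*} [PartialOrder β] {x y : β} (h1 : ¬ x ≤ y) (_h2 : ¬ y ≤ x) :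
    ∃ s : β → β → Prop, IsLinearOrder β s ∧ (∀ a b : β, a ≤ b → s a b) ∧ s y x := by
  set q : β → β → Prop := fun a b => a ≤ b ∨ (a ≤ y ∧ x ≤ b) with hq
  haveI : IsPartialOrder β q := {
    refl := fun a => Or.inl le_rfl
    trans := by
      rintro a b d (hab | ⟨hay, hxb⟩) (hbd | ⟨hby, hxd⟩)
      exacts [Or.inl (hab.trans hbd), Or.inr ⟨hab.trans hby, hxd⟩,
        Or.inr ⟨hay, hxb.trans hbd⟩, Or.inr ⟨hay, hxd⟩]
    antisymm := by
      rintro a b (hab | ⟨hay, hxb⟩) (hba | ⟨hby, hxa⟩)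
      · exact le_antisymm hab hba
      · exact absurd ((hxa.trans hab).trans hby) h1
      · exact absurd ((hxb.trans hba).trans hay) h1
      · exact absurd (hxb.trans hby) h1 }
  obtain ⟨s, hs, hqs⟩ := extend_partialOrder q
  exact ⟨s, hs, fun a b hab => hqs _ _ (Or.inl hab), hqs _ _ (Or.inr ⟨le_rfl, le_rfl⟩)⟩

noncomputable def pleOfLinear {β : Type*} [PartialOrder β] (s : β → β → Prop)
    (h : IsLinearOrder β s) (hext : ∀ a b : β, a ≤ b → s a b) : PLE β :=
  letI := h
  { S := Set.univ
    r := s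
    mem_of_rel := fun _ _ _ => ⟨trivial, trivial⟩
    refl := fun a _ => refl_of s a
    antisymm' := fun _ _ h1 h2 => _root_.antisymm h1 h2
    trans' := fun _ _ _ h1 h2 => trans_of s h1 h2
    total := fun a _ b _ => total_of s a b
    extends_le := fun a _ b _ hab => hext a b hab }

@[simp] lemma pleOfLinear_S {β : Type*} [PartialOrder β] (s : β → β → Prop)
    (h : IsLinearOrder β s) (hext : ∀ a b : β, a ≤ b → s a b) :
    (pleOfLinear s h hext).S = Set.univ := rfl

def liftPLE {α : Type*} [PartialOrder α] {t : ℕ} (c : α → Fin t) (i : Fin t)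
    (P : PLE {x : α // c x = i}) : PLE α where
  S := {a | ∃ h : c a = i, (⟨a, h⟩ : {x : α // c x = i}) ∈ P.S}
  r := fun a b => ∃ (ha : c a = i) (hb : c b = i), P.r ⟨a, ha⟩ ⟨b, hb⟩
  mem_of_rel := fun a b ⟨ha, hb, hr⟩ =>
    ⟨⟨ha, (P.mem_of_rel _ _ hr).1⟩, ⟨hb, (P.mem_of_rel _ _ hr).2⟩⟩
  refl := fun a ⟨ha, hm⟩ => ⟨ha, ha, P.refl _ hm⟩
  antisymm' := fun a b ⟨ha, hb, h1⟩ ⟨hb', ha', h2⟩ =>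
    congrArg Subtype.val (P.antisymm' ⟨a, ha⟩ ⟨b, hb⟩ h1 h2)
  trans' := fun a b d ⟨ha, hb, h1⟩ ⟨hb', hd, h2⟩ => ⟨ha, hd, P.trans' _ _ _ h1 h2⟩
  total := fun a ⟨ha, hma⟩ b ⟨hb, hmb⟩ => by
    rcases P.total _ hma _ hmb with h | h
    exacts [Or.inl ⟨ha, hb, h⟩, Or.inr ⟨hb, ha, h⟩]
  extends_le := fun a ⟨ha, hma⟩ b ⟨hb, hmb⟩ hab =>
    ⟨ha, hb, P.extends_le _ hma _ hmb (Subtype.mk_le_mk.2 hab)⟩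

lemma ldim_spec (β : Type*) [Fintype β] [PartialOrder β] :
    ∃ (T : ℕ) (L : Fin T → PLE β), IsLocalRealizer L ∧
      ∀ u : β, ({i | u ∈ (L i).S} : Set (Fin T)).ncard ≤ ldim β := by
  classical
  have hne : {k | 0 < k ∧ ∃ (t : ℕ) (L : Fin t → PLE β),
      IsLocalRealizer L ∧ ∀ u : β, ({i | u ∈ (L i).S} : Set (Fin t)).ncard ≤ k}.Nonempty := by
    have hrev : ∀ p : {p : β × β // ¬ p.1 ≤ p.2 ∧ ¬ p.2 ≤ p.1}, ∃ s : β → β → Prop,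
        IsLinearOrder β s ∧ (∀ a b : β, a ≤ b → s a b) ∧ s p.1.2 p.1.1 :=
      fun p => exists_reversal p.2.1 p.2.2
    choose sR hR1 hR2 hR3 using hrev
    obtain ⟨s0, hs0, hext0⟩ := extend_partialOrder ((· ≤ ·) : β → β → Prop)
    let F : Option {p : β × β // ¬ p.1 ≤ p.2 ∧ ¬ p.2 ≤ p.1} → PLE β := fun o =>
      match o with
      | none => pleOfLinear s0 hs0 (fun a b hab => hext0 a b hab)
      | some p => pleOfLinear (sR p) (hR1 p) (hR2 p)
    let e := Fintype.equivFin (Option {p : β × β // ¬ p.1 ≤ p.2 ∧ ¬ p.2 ≤ p.1})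
    refine ⟨Fintype.card (Option {p : β × β // ¬ p.1 ≤ p.2 ∧ ¬ p.2 ≤ p.1}),
      by simp [Fintype.card_option], _, F ∘ e.symm, ⟨?_, ?_⟩, ?_⟩
    · intro x y _
      refine ⟨e none, ?_, ?_⟩ <;>
        · show _ ∈ (F (e.symm (e none))).S
          rw [Equiv.symm_apply_apply]
          exact trivial
    · intro x y hxy hyx
      refine ⟨e (some ⟨(x, y), hxy, hyx⟩), ?_⟩
      show (F (e.symm (e _))).r y x
      rw [Equiv.symm_apply_apply]
      exact hR3 _
    · intro u
      calc ({i | u ∈ ((F ∘ e.symm) i).S}).ncard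
          ≤ (Set.univ : Set (Fin _)).ncard :=
            Set.ncard_le_ncard (Set.subset_univ _) (Set.toFinite _)
        _ = _ := by simp [Set.ncard_univ]
  obtain ⟨hpos, T, L, hreal, hload⟩ := Nat.sInf_mem hne
  exact ⟨T, L, hreal, hload⟩

/-- If a finite poset is disconnected with components `C_1, …, C_t` (`t ≥ 2`), then
`ldim P ≤ 2 + max_i ldim C_i`.  The function `c` assigns to each element its component:
two elements lie in the same component iff they are connected in the cover graph. -/
theorem ldim_le_of_components (α : Type*) [Fintype α] [PartialOrder α]
    (t : ℕ) (ht : 2 ≤ t) (c : α → Fin t) (hsurj : Function.Surjective c)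
    (hcomp : ∀ x y : α, c x = c y ↔ (coverGraph α).Reachable x y) :
    ldim α ≤ 2 + Finset.univ.sup (fun i : Fin t => ldim {x : α // c x = i}) := by
  classical
  set K := Finset.univ.sup (fun i : Fin t => ldim {x : α // c x = i}) with hKdef
  have hK : ∀ i : Fin t, ldim {x : α // c x = i} ≤ K :=
    fun i => Finset.le_sup (f := fun i : Fin t => ldim {x : α // c x = i}) (Finset.mem_univ i)
  have hcc : ∀ x y : α, x ≤ y → c x = c y :=
    fun x y h => (hcomp x y).2 (reachable_of_le y x h)
  -- component realizers
  have hspec : ∀ i : Fin t, ∃ (T : ℕ) (L : Fin T → PLE {x : α // c x = i}),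
      IsLocalRealizer L ∧ ∀ u, ({j | u ∈ (L j).S} : Set (Fin T)).ncard ≤ ldim {x : α // c x = i} :=
    fun i => ldim_spec _
  choose T L hreal hload using hspec
  -- global linear extension
  obtain ⟨s0, hs0, hext0⟩ := extend_partialOrder ((· ≤ ·) : α → α → Prop)
  haveI := hs0
  -- the two global PLEs
  let M : Bool → PLE α := fun d =>
    { S := Set.univ
      r := fun a b => (if d then (c a < c b) else (c b < c a)) ∨ (c a = c b ∧ s0 a b)
      mem_of_rel := fun _ _ _ => ⟨trivial, trivial⟩
      refl := fun a _ => Or.inr ⟨rfl, refl_of s0 a⟩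
      antisymm' := by
        rintro a b (h | ⟨e1, h⟩) (h' | ⟨e2, h'⟩)
        · cases d <;> simp_all <;> exact absurd h' (lt_asymm h)
        · rw [e2] at h; cases d <;> simp_all
        · rw [e1] at h'; cases d <;> simp_all
        · exact _root_.antisymm h h'
      trans' := by
        rintro a b d' (h | ⟨e1, h⟩) (h' | ⟨e2, h'⟩)
        · left
          cases d <;> simp_all
          exacts [h'.trans h, h.trans h']
        · left; rw [← e2]; exact h
        · left; rw [e1]; exact h'
        · exact Or.inr ⟨e1.trans e2, trans_of s0 h h'⟩
      total := by
        intro a _ b _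
        rcases lt_trichotomy (c a) (c b) with h | h | h
        · cases d
          · exact Or.inr (Or.inl h)
          · exact Or.inl (Or.inl h)
        · rcases total_of s0 a b with h' | h'
          · exact Or.inl (Or.inr ⟨h, h'⟩)
          · exact Or.inr (Or.inr ⟨h.symm, h'⟩)
        · cases d
          · exact Or.inl (Or.inl h)
          · exact Or.inr (Or.inl h)
      extends_le := fun a _ b _ hab => Or.inr ⟨hcc a b hab, hext0 a b hab⟩ }
  -- full index type
  let e := Fintype.equivFin (Bool ⊕ (Σ i : Fin t, Fin (T i)))
  let G : (Bool ⊕ (Σ i : Fin t, Fin (T i))) → PLE α := fun x =>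
    match x with
    | Sum.inl d => M d
    | Sum.inr ⟨i, j⟩ => liftPLE c i (L i j)
  refine Nat.sInf_le ⟨by omega, Fintype.card (Bool ⊕ (Σ i : Fin t, Fin (T i))),
    G ∘ e.symm, ⟨?_, ?_⟩, ?_⟩
  · -- comparabilities
    intro x y hxy
    have hc : c x = c y := hcc x y hxy
    obtain ⟨j, hx, hy⟩ := (hreal (c x)).1 ⟨x, rfl⟩ ⟨y, hc.symm⟩ (Subtype.mk_le_mk.2 hxy)
    refine ⟨e (Sum.inr ⟨c x, j⟩), ?_, ?_⟩ <;>
      · show _ ∈ (G (e.symm (e _))).S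
        rw [Equiv.symm_apply_apply]
        first
        | exact ⟨rfl, hx⟩
        | exact ⟨hc.symm, hy⟩
  · -- incomparabilities
    intro x y hxy hyx
    by_cases hc : c x = c y
    · have hx' : ¬ (⟨x, rfl⟩ : {z : α // c z = c x}) ≤ ⟨y, hc.symm⟩ := fun h => hxy h
      have hy' : ¬ (⟨y, hc.symm⟩ : {z : α // c z = c x}) ≤ ⟨x, rfl⟩ := fun h => hyx h
      obtain ⟨j, hj⟩ := (hreal (c x)).2 _ _ hx' hy'
      refine ⟨e (Sum.inr ⟨c x, j⟩), ?_⟩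
      show (G (e.symm (e _))).r y x
      rw [Equiv.symm_apply_apply]
      exact ⟨hc.symm, rfl, hj⟩
    · rcases lt_or_gt_of_ne hc with h | h
      · -- c x < c y : use M false, whose r y x = (c x < c y) ∨ ...
        refine ⟨e (Sum.inl false), ?_⟩
        show (G (e.symm (e _))).r y x
        rw [Equiv.symm_apply_apply]
        exact Or.inl (by simpa using h)
      · refine ⟨e (Sum.inl true), ?_⟩
        show (G (e.symm (e _))).r y x
        rw [Equiv.symm_apply_apply]
        exact Or.inl (by simpa using h)
  · -- load bound
    intro u
    have himg : {j | u ∈ ((G ∘ e.symm) j).S} = e '' {x | u ∈ (G x).S} := by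
      rw [Equiv.image_eq_preimage_symm]; rfl
    rw [himg, Set.ncard_image_of_injective _ e.injective]
    have hsub : {x | u ∈ (G x).S} ⊆
        (Set.range (Sum.inl : Bool → Bool ⊕ (Σ i : Fin t, Fin (T i)))) ∪
        (Sum.inr '' {p : Σ i : Fin t, Fin (T i) | u ∈ (G (Sum.inr p)).S}) := by
      rintro (d | p) h
      · exact Or.inl ⟨d, rfl⟩
      · exact Or.inr ⟨p, h, rfl⟩
    have hB : {p : Σ i : Fin t, Fin (T i) | u ∈ (G (Sum.inr p)).S} ⊆
        Sigma.mk (c u) '' {j : Fin (T (c u)) |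
          (⟨u, rfl⟩ : {z : α // c z = c u}) ∈ (L (c u) j).S} := by
      rintro ⟨i, j⟩ ⟨hh, hm⟩
      subst hh
      exact ⟨j, hm, rfl⟩
    calc {x | u ∈ (G x).S}.ncard
        ≤ ((Set.range (Sum.inl : Bool → Bool ⊕ (Σ i : Fin t, Fin (T i)))) ∪
            (Sum.inr '' {p : Σ i : Fin t, Fin (T i) | u ∈ (G (Sum.inr p)).S})).ncard :=
          Set.ncard_le_ncard hsub (Set.toFinite _)
      _ ≤ (Set.range (Sum.inl : Bool → Bool ⊕ (Σ i : Fin t, Fin (T i)))).ncard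
            + (Sum.inr '' {p : Σ i : Fin t, Fin (T i) | u ∈ (G (Sum.inr p)).S}).ncard :=
          Set.ncard_union_le _ _
      _ ≤ 2 + K := by
          have h1 : (Set.range (Sum.inl : Bool → Bool ⊕ (Σ i : Fin t, Fin (T i)))).ncard = 2 := by
            rw [← Set.image_univ, Set.ncard_image_of_injective _ Sum.inl_injective,
              Set.ncard_univ]
            simp
          have h2 : ((Sum.inr : (Σ i : Fin t, Fin (T i)) → Bool ⊕ (Σ i : Fin t, Fin (T i))) ''
              {p : Σ i : Fin t, Fin (T i) | u ∈ (G (Sum.inr p)).S}).ncard ≤ K := by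
            rw [Set.ncard_image_of_injective _ Sum.inr_injective]
            calc {p : Σ i : Fin t, Fin (T i) | u ∈ (G (Sum.inr p)).S}.ncard
                ≤ (Sigma.mk (c u) '' {j : Fin (T (c u)) |
                    (⟨u, rfl⟩ : {z : α // c z = c u}) ∈ (L (c u) j).S}).ncard :=
                  Set.ncard_le_ncard hB (Set.toFinite _)
              _ = _ := Set.ncard_image_of_injective _ sigma_mk_injective
              _ ≤ ldim {x : α // c x = c u} := hload (c u) _
              _ ≤ K := hK (c u)
          rw [h1]
          exact Nat.add_le_add_left h2 2
end

section
/- For every d ≥ 2, if n ≥ BTRam(1,3,d²) then the Joret–Micek–Wiechert poset P_n satisfies ldim(P_n) > d. -/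
/-- The complete binary tree `T_n`: binary strings of length at most `n`. -/
def BStr (n : ℕ) := {l : List Bool // l.length ≤ n}

/-- A strong copy of `T_m` in `T_n`: an order-isomorphism onto its image (with respect to
the initial-segment order) that also preserves the left/right subtree relations. -/
def StrongCopy (m n : ℕ) (f : BStr m → BStr n) : Prop :=
  Function.Injective f ∧
  (∀ x y : BStr m, x.val <+: y.val ↔ (f x).val <+: (f y).val) ∧
  (∀ (x y : BStr m) (b : Bool), (x.val ++ [b]) <+: y.val → ((f x).val ++ [b]) <+: (f y).val)

/-- The Milliken tree Ramsey number `BTRam(m,p,r)`: the least `n` such that every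
`r`-coloring of the strong copies of `T_m` in `T_n` admits a strong copy of `T_p` in `T_n`
all of whose strong copies of `T_m` receive the same color. -/
noncomputable def BTRam (m p r : ℕ) : ℕ :=
  sInf {n | ∀ φ : (BStr m → BStr n) → Fin r,
    ∃ g : BStr p → BStr n, StrongCopy p n g ∧
      ∃ c : Fin r, ∀ f : BStr m → BStr p, StrongCopy m p f → φ (g ∘ f) = c}

/-- The Joret–Micek–Wiechert poset `P_n`.  `(false, x)` is `a_x` and `(true, x)` is `b_x`;
`b_x < b_y` iff `x` is a proper initial segment of `y`; `a_x > a_y` iff `x` is a proper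
initial segment of `y`; and `a_x < b_y` iff neither of `x, y` is an initial segment of
the other. -/
def JMW (n : ℕ) := Bool × BStr n

instance (n : ℕ) : PartialOrder (JMW n) where
  le p q := p = q ∨
    (p.1 = true ∧ q.1 = true ∧ p.2.val <+: q.2.val) ∨
    (p.1 = false ∧ q.1 = false ∧ q.2.val <+: p.2.val) ∨
    (p.1 = false ∧ q.1 = true ∧ ¬ p.2.val <+: q.2.val ∧ ¬ q.2.val <+: p.2.val)
  le_refl p := Or.inl rfl
  le_trans := by
    rintro p q r hpq hqr
    rcases hpq with rfl | ⟨h1, h2, h3⟩ | ⟨h1, h2, h3⟩ | ⟨h1, h2, h3, h4⟩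
    · exact hqr
    · -- b_x ≤ b_y
      rcases hqr with rfl | ⟨g1, g2, g3⟩ | ⟨g1, g2, g3⟩ | ⟨g1, g2, g3, g4⟩
      · exact Or.inr (Or.inl ⟨h1, h2, h3⟩)
      · exact Or.inr (Or.inl ⟨h1, g2, h3.trans g3⟩)
      · rw [h2] at g1; exact absurd g1 (by simp)
      · rw [h2] at g1; exact absurd g1 (by simp)
    · -- a_x ≤ a_y  (h3 : y <+: x)
      rcases hqr with rfl | ⟨g1, g2, g3⟩ | ⟨g1, g2, g3⟩ | ⟨g1, g2, g3, g4⟩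
      · exact Or.inr (Or.inr (Or.inl ⟨h1, h2, h3⟩))
      · rw [h2] at g1; exact absurd g1 (by simp)
      · exact Or.inr (Or.inr (Or.inl ⟨h1, g2, g3.trans h3⟩))
      · refine Or.inr (Or.inr (Or.inr ⟨h1, g2, fun hxz => ?_, fun hzx => ?_⟩))
        · exact g3 (h3.trans hxz)
        · rcases List.prefix_or_prefix_of_prefix hzx h3 with hrq | hqr'
          · exact g4 hrq
          · exact g3 hqr'
    · -- a_x ≤ b_y  (incomparable strings)
      rcases hqr with rfl | ⟨g1, g2, g3⟩ | ⟨g1, g2, g3⟩ | ⟨g1, g2, g3, g4⟩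
      · exact Or.inr (Or.inr (Or.inr ⟨h1, h2, h3, h4⟩))
      · refine Or.inr (Or.inr (Or.inr ⟨h1, g2, fun hxz => ?_, fun hzx => ?_⟩))
        · rcases List.prefix_or_prefix_of_prefix g3 hxz with hyx | hxy
          · exact h4 hyx
          · exact h3 hxy
        · exact h4 (g3.trans hzx)
      · rw [h2] at g1; exact absurd g1 (by simp)
      · rw [h2] at g1; exact absurd g1 (by simp)
  le_antisymm := by
    rintro p q hpq hqp
    rcases hpq with rfl | ⟨h1, h2, h3⟩ | ⟨h1, h2, h3⟩ | ⟨h1, h2, h3, h4⟩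
    · rfl
    · rcases hqp with rfl | ⟨g1, g2, g3⟩ | ⟨g1, g2, g3⟩ | ⟨g1, g2, g3, g4⟩
      · rfl
      · exact Prod.ext (h1.trans g1.symm) (Subtype.ext (h3.sublist.antisymm g3.sublist))
      · simp [h2] at g1
      · simp [h2] at g1
    · rcases hqp with rfl | ⟨g1, g2, g3⟩ | ⟨g1, g2, g3⟩ | ⟨g1, g2, g3, g4⟩
      · rfl
      · simp [h2] at g1
      · exact Prod.ext (h1.trans g1.symm) (Subtype.ext (g3.sublist.antisymm h3.sublist))
      · simp [h1] at g2
    · rcases hqp with rfl | ⟨g1, g2, g3⟩ | ⟨g1, g2, g3⟩ | ⟨g1, g2, g3, g4⟩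
      · simp [h1] at h2
      · simp [h1] at g2
      · simp [h2] at g1
      · simp [h2] at g1


/-! ### Auxiliary development -/

namespace JMWaux

open List

/-- longest common prefix of two boolean lists -/
def cp : List Bool → List Bool → List Bool
  | a::as, b::bs => if a = b then a :: cp as bs else []
  | _, _ => []

theorem cp_prefix_left : ∀ x y : List Bool, cp x y <+: x
  | [], y => by cases y <;> simp [cp]
  | a::as, [] => by simp [cp]
  | a::as, b::bs => by
    by_cases h : a = b
    · simp only [cp, if_pos h]
      exact List.cons_prefix_cons.mpr ⟨rfl, cp_prefix_left as bs⟩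
    · simp [cp, h]

theorem cp_eq_of_branch : ∀ (p x y : List Bool), p ++ [false] <+: x → p ++ [true] <+: y →
    cp x y = p
  | [], x, y, hx, hy => by
    simp only [List.nil_append] at hx hy
    obtain ⟨xs, rfl⟩ : ∃ t, x = false :: t := by
      cases x with
      | nil => exact absurd hx.length_le (by simp)
      | cons c cs => obtain ⟨h1, -⟩ := List.cons_prefix_cons.mp hx; exact ⟨cs, by rw [h1]⟩
    obtain ⟨ys, rfl⟩ : ∃ t, y = true :: t := by
      cases y with
      | nil => exact absurd hy.length_le (by simp)
      | cons c cs => obtain ⟨h1, -⟩ := List.cons_prefix_cons.mp hy; exact ⟨cs, by rw [h1]⟩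
    simp [cp]
  | c::p, x, y, hx, hy => by
    obtain ⟨xs, rfl, hx'⟩ : ∃ t, x = c :: t ∧ p ++ [false] <+: t := by
      cases x with
      | nil => exact absurd hx.length_le (by simp)
      | cons e es =>
        obtain ⟨h1, h2⟩ := List.cons_prefix_cons.mp hx
        exact ⟨es, by rw [h1], h2⟩
    obtain ⟨ys, rfl, hy'⟩ : ∃ t, y = c :: t ∧ p ++ [true] <+: t := by
      cases y with
      | nil => exact absurd hy.length_le (by simp)
      | cons e es =>
        obtain ⟨h1, h2⟩ := List.cons_prefix_cons.mp hy
        exact ⟨es, by rw [h1], h2⟩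
    simp [cp, cp_eq_of_branch p xs ys hx' hy']

/-- two lists extending sibling positions are prefix-incomparable -/
theorem branch_ne {v p q : List Bool} {b b' : Bool} (hbb : b ≠ b')
    (hp : v ++ [b] <+: p) (hq : v ++ [b'] <+: q) : ¬ p <+: q := by
  intro hpq
  have h1 : v ++ [b] <+: q := hp.trans hpq
  have h2 : v ++ [b] = v ++ [b'] := by
    rcases List.prefix_or_prefix_of_prefix h1 hq with h | h
    · exact h.eq_of_length (by simp)
    · exact (h.eq_of_length (by simp)).symm
  have := List.append_cancel_left h2
  simp at this
  exact hbb this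

theorem sc_id (n : ℕ) : StrongCopy n n id :=
  ⟨fun _ _ h => h, fun _ _ => Iff.rfl, fun _ _ _ h => h⟩

theorem sc_comp {a b c : ℕ} {f : BStr a → BStr b} {g : BStr b → BStr c}
    (hf : StrongCopy a b f) (hg : StrongCopy b c g) : StrongCopy a c (g ∘ f) :=
  ⟨hg.1.comp hf.1, fun x y => (hf.2.1 x y).trans (hg.2.1 _ _),
   fun x y bb h => hg.2.2 _ _ _ (hf.2.2 x y bb h)⟩

/-- embedding of the subtree above `w` -/
def embedMap {m n : ℕ} (w : List Bool) (h : w.length + m ≤ n) (x : BStr m) : BStr n :=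
  ⟨w ++ x.val, by have := x.property; simp only [List.length_append]; omega⟩

theorem embedMap_val {m n : ℕ} (w : List Bool) (h : w.length + m ≤ n) (x : BStr m) :
    (embedMap w h x).val = w ++ x.val := rfl

theorem sc_embed {m n : ℕ} (w : List Bool) (h : w.length + m ≤ n) :
    StrongCopy m n (embedMap w h) := by
  refine ⟨?_, ?_, ?_⟩
  · intro a b hab
    apply Subtype.ext
    exact List.append_cancel_left (congrArg Subtype.val hab)
  · intro x y
    exact (List.prefix_append_right_inj w).symm
  · intro x y b hb
    show (w ++ x.val) ++ [b] <+: w ++ y.val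
    rw [List.append_assoc]
    exact (List.prefix_append_right_inj w).mpr hb

section Glue
variable {m n : ℕ}

/-- glue a root value with two functions on the subtrees -/
def glueFun {β : Type*} (v : β) (g0 g1 : BStr m → β) : BStr (m+1) → β
  | ⟨[], _⟩ => v
  | ⟨false :: t, ht⟩ => g0 ⟨t, by simpa using Nat.le_of_succ_le_succ (by simpa using ht)⟩
  | ⟨true :: t, ht⟩ => g1 ⟨t, by simpa using Nat.le_of_succ_le_succ (by simpa using ht)⟩

theorem glueFun_nil {β : Type*} (v : β) (g0 g1 : BStr m → β) (h) :
    glueFun v g0 g1 ⟨[], h⟩ = v := rfl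

theorem glueFun_false {β : Type*} (v : β) (g0 g1 : BStr m → β) (t : List Bool) (h) (h') :
    glueFun v g0 g1 ⟨false :: t, h⟩ = g0 ⟨t, h'⟩ := rfl

theorem glueFun_true {β : Type*} (v : β) (g0 g1 : BStr m → β) (t : List Bool) (h) (h') :
    glueFun v g0 g1 ⟨true :: t, h⟩ = g1 ⟨t, h'⟩ := rfl

theorem branch_ne' {v p q : List Bool} {b b' : Bool} (hbb : b ≠ b')
    (hp : v ++ [b] <+: p) (hq : v ++ [b'] <+: q) : p ≠ q := by
  intro h
  exact branch_ne hbb hp hq (h ▸ List.prefix_refl p)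

theorem ne_of_proper {v q : List Bool} {b : Bool} (hq : v ++ [b] <+: q) : v ≠ q := by
  intro h
  have := hq.length_le
  rw [← h] at this
  simp at this

theorem sc_glue {v : BStr n} {g0 g1 : BStr m → BStr n}
    (h0 : StrongCopy m n g0) (h1 : StrongCopy m n g1)
    (r0 : ∀ x, v.val ++ [false] <+: (g0 x).val)
    (r1 : ∀ x, v.val ++ [true] <+: (g1 x).val) :
    StrongCopy (m+1) n (glueFun v g0 g1) := by
  have hlen0 : ∀ x, ¬ (g0 x).val <+: v.val := by
    intro x hx
    have := ((r0 x).trans hx).length_le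
    simp at this
  have hlen1 : ∀ x, ¬ (g1 x).val <+: v.val := by
    intro x hx
    have := ((r1 x).trans hx).length_le
    simp at this
  have hne : (false : Bool) ≠ true := by simp
  refine ⟨?_, ?_, ?_⟩
  · -- injective
    rintro ⟨(_ | ⟨_ | _, xt⟩), hx⟩ ⟨(_ | ⟨_ | _, yt⟩), hy⟩ h <;>
      simp only [glueFun] at h
    · rfl
    · exact absurd (congrArg Subtype.val h) (ne_of_proper (r0 _))
    · exact absurd (congrArg Subtype.val h) (ne_of_proper (r1 _))
    · exact absurd (congrArg Subtype.val h).symm (ne_of_proper (r0 _))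
    · have := h0.1 h
      apply Subtype.ext
      simpa using congrArg Subtype.val this
    · exact absurd (congrArg Subtype.val h) (branch_ne' hne (r0 _) (r1 _))
    · exact absurd (congrArg Subtype.val h).symm (ne_of_proper (r1 _))
    · exact absurd (congrArg Subtype.val h) (branch_ne' (Ne.symm hne) (r1 _) (r0 _))
    · have := h1.1 h
      apply Subtype.ext
      simpa using congrArg Subtype.val this
  · -- prefix iff
    rintro ⟨(_ | ⟨_ | _, xt⟩), hx⟩ ⟨(_ | ⟨_ | _, yt⟩), hy⟩ <;>
      simp only [glueFun]
    · simp
    · simp only [List.nil_prefix, true_iff]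
      exact (List.prefix_append v.val [false]).trans (r0 _)
    · simp only [List.nil_prefix, true_iff]
      exact (List.prefix_append v.val [true]).trans (r1 _)
    · constructor
      · intro h; exact absurd h.length_le (by simp)
      · intro h; exact absurd h (hlen0 _)
    · rw [List.cons_prefix_cons]
      simp only [true_and]
      exact h0.2.1 ⟨xt, _⟩ ⟨yt, _⟩
    · constructor
      · intro h; exact absurd (List.cons_prefix_cons.mp h).1 (by simp)
      · intro h; exact absurd h (branch_ne hne (r0 _) (r1 _))
    · constructor
      · intro h; exact absurd h.length_le (by simp)
      · intro h; exact absurd h (hlen1 _)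
    · constructor
      · intro h; exact absurd (List.cons_prefix_cons.mp h).1 (by simp)
      · intro h; exact absurd h (branch_ne (Ne.symm hne) (r1 _) (r0 _))
    · rw [List.cons_prefix_cons]
      simp only [true_and]
      exact h1.2.1 ⟨xt, _⟩ ⟨yt, _⟩
  · -- append
    rintro ⟨(_ | ⟨_ | _, xt⟩), hx⟩ ⟨(_ | ⟨_ | _, yt⟩), hy⟩ b h <;>
      simp only [List.nil_append, List.cons_append] at h <;>
      simp only [glueFun]
    · exact absurd h.length_le (by simp)
    · obtain ⟨rfl, -⟩ := List.cons_prefix_cons.mp h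
      exact r0 _
    · obtain ⟨rfl, -⟩ := List.cons_prefix_cons.mp h
      exact r1 _
    · exact absurd h.length_le (by simp)
    · exact h0.2.2 ⟨xt, _⟩ ⟨yt, _⟩ b (List.cons_prefix_cons.mp h).2
    · exact absurd (List.cons_prefix_cons.mp h).1 (by simp)
    · exact absurd h.length_le (by simp)
    · exact absurd (List.cons_prefix_cons.mp h).1 (by simp)
    · exact h1.2.2 ⟨xt, _⟩ ⟨yt, _⟩ b (List.cons_prefix_cons.mp h).2
end Glue

section GreedyV

theorem bstr0_val (x : BStr 0) : x.val = [] :=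
  List.eq_nil_of_length_eq_zero (Nat.le_zero.mp x.property)

theorem sc_const {N : ℕ} (v : BStr N) : StrongCopy 0 N (fun _ => v) := by
  refine ⟨?_, ?_, ?_⟩
  · intro a b _
    apply Subtype.ext
    rw [bstr0_val a, bstr0_val b]
  · intro x y
    rw [bstr0_val x, bstr0_val y]
    simp
  · intro x y b h
    rw [bstr0_val x, bstr0_val y] at h
    simp at h

theorem greedy {N h : ℕ} (P : BStr N → Prop)
    (dense : ∀ u : BStr N, u.val.length + h ≤ N →
      ∃ v : BStr N, u.val <+: v.val ∧ v.val.length ≤ u.val.length + h ∧ P v) :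
    ∀ (m : ℕ) (u0 : BStr N), u0.val.length + (m+1) * (h+1) ≤ N →
      ∃ g : BStr m → BStr N, StrongCopy m N g ∧
        ∀ x, u0.val <+: (g x).val ∧ P (g x) := by
  intro m
  induction m with
  | zero =>
    intro u0 hu0
    obtain ⟨v, hv1, hv2, hv3⟩ := dense u0 (by omega)
    exact ⟨fun _ => v, sc_const v, fun _ => ⟨hv1, hv3⟩⟩
  | succ m ih =>
    intro u0 hu0
    have hmul : (m+1+1) * (h+1) = (m+1)*(h+1) + (h+1) := by ring
    obtain ⟨A, hQ⟩ : ∃ A, (m+1)*(h+1) = A := ⟨_, rfl⟩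
    rw [hmul, hQ] at hu0
    simp only [hQ] at ih
    obtain ⟨v, hv1, hv2, hv3⟩ := dense u0 (by omega)
    have hulen := hv1.length_le
    have hb0 : (v.val ++ [false]).length + A ≤ N := by simp; omega
    have hb1 : (v.val ++ [true]).length + A ≤ N := by simp; omega
    obtain ⟨g0, hg0, hp0⟩ := ih ⟨v.val ++ [false], by simp; omega⟩ hb0
    obtain ⟨g1, hg1, hp1⟩ := ih ⟨v.val ++ [true], by simp; omega⟩ hb1
    refine ⟨glueFun v g0 g1, sc_glue hg0 hg1 (fun x => (hp0 x).1) (fun x => (hp1 x).1), ?_⟩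
    rintro ⟨(_ | ⟨_ | _, t⟩), hx⟩ <;> simp only [glueFun]
    · exact ⟨hv1, hv3⟩
    · exact ⟨hv1.trans ((List.prefix_append _ [false]).trans (hp0 _).1), (hp0 _).2⟩
    · exact ⟨hv1.trans ((List.prefix_append _ [true]).trans (hp1 _).1), (hp1 _).2⟩

theorem treeV (r m : ℕ) : ∃ N, ∀ c : BStr N → Fin r,
    ∃ (g : BStr m → BStr N) (k : Fin r), StrongCopy m N g ∧ ∀ x, c (g x) = k := by
  induction r with
  | zero => exact ⟨0, fun c => (c ⟨[], by simp⟩).elim0⟩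
  | succ r ih =>
    obtain ⟨Nr, hNr⟩ := ih
    refine ⟨(m+1) * (Nr+1) + Nr, fun c => ?_⟩
    by_cases hcase : ∃ (u : BStr ((m+1) * (Nr+1) + Nr))
        (hu : u.val.length + Nr ≤ (m+1) * (Nr+1) + Nr),
        ∀ w : BStr Nr, c (embedMap u.val hu w) ≠ Fin.last r
    · obtain ⟨u, hu, hfree⟩ := hcase
      obtain ⟨g', k, hg', hk⟩ := hNr (fun w => (c (embedMap u.val hu w)).castPred (hfree w))
      refine ⟨embedMap u.val hu ∘ g', k.castSucc, sc_comp hg' (sc_embed _ _), fun x => ?_⟩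
      have h2 := congrArg Fin.castSucc (hk x)
      rwa [Fin.castSucc_castPred] at h2
    · push_neg at hcase
      have dense : ∀ u : BStr ((m+1) * (Nr+1) + Nr), u.val.length + Nr ≤ (m+1) * (Nr+1) + Nr →
          ∃ v : BStr ((m+1) * (Nr+1) + Nr), u.val <+: v.val ∧
            v.val.length ≤ u.val.length + Nr ∧ c v = Fin.last r := by
        intro u hu
        obtain ⟨w, hw⟩ := hcase u hu
        refine ⟨embedMap u.val hu w, List.prefix_append _ _, ?_, hw⟩
        have := w.property
        simp only [embedMap_val, List.length_append]
        omega
      obtain ⟨g, hg, hp⟩ := greedy _ dense m ⟨[], by simp⟩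
        (by simpa using Nat.le_add_right ((m+1)*(Nr+1)) Nr)
      exact ⟨g, Fin.last r, hg, fun x => (hp x).2⟩

theorem treeIter (R : ℕ) : ∀ (k D : ℕ), ∃ N, ∀ ψ : Fin k → BStr N → Fin R,
    ∃ g : BStr D → BStr N, StrongCopy D N g ∧ ∀ j, ∃ cj, ∀ a, ψ j (g a) = cj := by
  intro k
  induction k with
  | zero => intro D; exact ⟨D, fun ψ => ⟨id, sc_id D, fun j => j.elim0⟩⟩
  | succ k ih =>
    intro D
    obtain ⟨N₁, h₁⟩ := ih D
    obtain ⟨N, hV⟩ := treeV R N₁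
    refine ⟨N, fun ψ => ?_⟩
    obtain ⟨g₁, c₀, hg₁, hmono⟩ := hV (ψ 0)
    obtain ⟨g₂, hg₂, hrest⟩ := h₁ (fun j a => ψ j.succ (g₁ a))
    refine ⟨g₁ ∘ g₂, sc_comp hg₂ hg₁, fun j => ?_⟩
    refine Fin.cases ?_ ?_ j
    · exact ⟨c₀, fun a => hmono _⟩
    · intro j'
      obtain ⟨cj, hc⟩ := hrest j'
      exact ⟨cj, fun a => hc a⟩

end GreedyV

section FintypeBStr

instance instDecEqBStr (n : ℕ) : DecidableEq (BStr n) := fun x y =>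
  decidable_of_iff (x.val = y.val) Subtype.ext_iff.symm

noncomputable instance instFintypeBStr (n : ℕ) : Fintype (BStr n) := by
  classical
  exact Fintype.ofInjective
    (fun x : BStr n => ((fun i : Fin (n+1) => x.val.getD i.val false),
      (⟨x.val.length, Nat.lt_succ_of_le x.property⟩ : Fin (n+1))))
    (by
      rintro ⟨x, hx⟩ ⟨y, hy⟩ h
      simp only [Prod.mk.injEq] at h
      obtain ⟨hfun, hlen⟩ := h
      have hl : x.length = y.length := by
        simpa using congrArg Fin.val hlen
      apply Subtype.ext
      apply List.ext_getElem hl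
      intro i h1 h2
      have h3 := congrFun hfun ⟨i, by omega⟩
      simpa [List.getD_eq_getElem?_getD, List.getElem?_eq_getElem, h1, h2] using h3)

theorem treeIter' (R S D : ℕ) : ∃ N, ∀ ψ : BStr S → BStr N → Fin R,
    ∃ g : BStr D → BStr N, StrongCopy D N g ∧ ∀ y, ∃ cy, ∀ a, ψ y (g a) = cy := by
  obtain ⟨N, hN⟩ := treeIter R (Fintype.card (BStr S)) D
  refine ⟨N, fun ψ => ?_⟩
  obtain ⟨g, hg, hrest⟩ := hN (fun j a => ψ ((Fintype.equivFin (BStr S)).symm j) a)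
  refine ⟨g, hg, fun y => ?_⟩
  obtain ⟨cy, hcy⟩ := hrest (Fintype.equivFin (BStr S) y)
  refine ⟨cy, fun a => ?_⟩
  have := hcy a
  rwa [Equiv.symm_apply_apply] at this

end FintypeBStr

section EndHom

theorem endHom (R : ℕ) (hR : 0 < R) : ∀ h : ℕ, ∃ N, ∀ ψ : BStr N → BStr N → Fin R,
    ∃ (g : BStr h → BStr N) (χ : BStr h → Fin R), StrongCopy h N g ∧
      ∀ (x y mm : BStr h), mm.val ++ [false] <+: x.val → mm.val ++ [true] <+: y.val →
        ψ (g x) (g y) = χ mm := by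
  intro h
  induction h with
  | zero =>
    refine ⟨0, fun ψ => ⟨id, fun _ => ⟨0, hR⟩, sc_id 0, ?_⟩⟩
    intro x y mm hf ht
    have h1 := hf.length_le
    rw [bstr0_val x] at h1
    simp at h1
  | succ h ihh =>
    obtain ⟨N₂, hF⟩ := ihh
    obtain ⟨S1, hV⟩ := treeV R N₂
    obtain ⟨NA, hIter⟩ := treeIter' R S1 N₂
    refine ⟨NA + S1 + 1, fun ψ => ?_⟩
    have hEA : ([false] : List Bool).length + NA ≤ NA + S1 + 1 := by simp; omega
    have hEB : ([true] : List Bool).length + S1 ≤ NA + S1 + 1 := by simp; omega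
    obtain ⟨gA1, hgA1, hstab⟩ := hIter (fun y a => ψ (embedMap [false] hEA a) (embedMap [true] hEB y))
    choose kk hkk using hstab
    obtain ⟨gB1, cstar, hgB1, hmono⟩ := hV kk
    obtain ⟨gA2, χA, hgA2, hA⟩ := hF (fun a b =>
      ψ (embedMap [false] hEA (gA1 a)) (embedMap [false] hEA (gA1 b)))
    obtain ⟨gB2, χB, hgB2, hB⟩ := hF (fun a b =>
      ψ (embedMap [true] hEB (gB1 a)) (embedMap [true] hEB (gB1 b)))
    refine ⟨glueFun (⟨[], by simp⟩ : BStr (NA + S1 + 1))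
        (embedMap [false] hEA ∘ gA1 ∘ gA2) (embedMap [true] hEB ∘ gB1 ∘ gB2),
      glueFun cstar χA χB, ?_, ?_⟩
    · apply sc_glue (sc_comp (sc_comp hgA2 hgA1) (sc_embed _ _))
        (sc_comp (sc_comp hgB2 hgB1) (sc_embed _ _))
      · intro x
        exact List.prefix_append [false] _
      · intro x
        exact List.prefix_append [true] _
    · intro x y mm hfx hty
      rcases mm with ⟨_ | ⟨_ | _, mt⟩, hm⟩
      · -- mm = []
        rcases x with ⟨_ | ⟨_ | _, xt⟩, hx⟩
        · exact absurd hfx.length_le (by simp)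
        · rcases y with ⟨_ | ⟨_ | _, yt⟩, hy⟩
          · exact absurd hty.length_le (by simp)
          · exact absurd (List.cons_prefix_cons.mp hty).1 (by simp)
          · simp only [glueFun, Function.comp_apply]
            exact (hkk (gB1 (gB2 _)) (gA2 _)).trans (hmono (gB2 _))
        · exact absurd (List.cons_prefix_cons.mp hfx).1 (by simp)
      · -- mm = false :: mt
        rcases x with ⟨_ | ⟨_ | _, xt⟩, hx⟩
        · exact absurd hfx.length_le (by simp)
        · rcases y with ⟨_ | ⟨_ | _, yt⟩, hy⟩
          · exact absurd hty.length_le (by simp)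
          · simp only [glueFun, Function.comp_apply]
            exact hA ⟨xt, _⟩ ⟨yt, _⟩ ⟨mt, _⟩ (List.cons_prefix_cons.mp hfx).2
              (List.cons_prefix_cons.mp hty).2
          · exact absurd (List.cons_prefix_cons.mp hty).1 (by simp)
        · exact absurd (List.cons_prefix_cons.mp hfx).1 (by simp)
      · -- mm = true :: mt
        rcases x with ⟨_ | ⟨_ | _, xt⟩, hx⟩
        · exact absurd hfx.length_le (by simp)
        · exact absurd (List.cons_prefix_cons.mp hfx).1 (by simp)
        · rcases y with ⟨_ | ⟨_ | _, yt⟩, hy⟩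
          · exact absurd hty.length_le (by simp)
          · exact absurd (List.cons_prefix_cons.mp hty).1 (by simp)
          · simp only [glueFun, Function.comp_apply]
            exact hB ⟨xt, _⟩ ⟨yt, _⟩ ⟨mt, _⟩ (List.cons_prefix_cons.mp hfx).2
              (List.cons_prefix_cons.mp hty).2

end EndHom

section Triple

/-- the canonical copy of `T_1` determined by an incomparable pair -/
def tripleFun {N : ℕ} (x y : BStr N) : BStr 1 → BStr N := fun z =>
  if z.val = [false] then x else if z.val = [true] then y
  else ⟨cp x.val y.val, le_trans (cp_prefix_left x.val y.val).length_le x.property⟩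

theorem tripleFun_f {N : ℕ} (x y : BStr N) (h) : tripleFun x y ⟨[false], h⟩ = x := by
  simp [tripleFun]

theorem tripleFun_t {N : ℕ} (x y : BStr N) (h) : tripleFun x y ⟨[true], h⟩ = y := by
  simp [tripleFun]

theorem tripleFun_0 {N : ℕ} (x y : BStr N) (h) :
    (tripleFun x y ⟨[], h⟩).val = cp x.val y.val := by
  simp [tripleFun]

theorem bstr1_val (z : BStr 1) : z.val = [] ∨ z.val = [false] ∨ z.val = [true] := by
  rcases z with ⟨_ | ⟨_ | _, t⟩, hz⟩
  · exact Or.inl rfl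
  · obtain rfl : t = [] := List.eq_nil_of_length_eq_zero (by simpa using hz)
    exact Or.inr (Or.inl rfl)
  · obtain rfl : t = [] := List.eq_nil_of_length_eq_zero (by simpa using hz)
    exact Or.inr (Or.inr rfl)

theorem tripleFun_comp {M N : ℕ} {f : BStr 1 → BStr M} {g : BStr M → BStr N}
    (hf : StrongCopy 1 M f) (hg : StrongCopy M N g) :
    g ∘ f = tripleFun (g (f ⟨[false], by simp⟩)) (g (f ⟨[true], by simp⟩)) := by
  have hb0 : (f ⟨[], by simp⟩).val ++ [false] <+: (f ⟨[false], by simp⟩).val :=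
    hf.2.2 _ _ false (by simp)
  have hb1 : (f ⟨[], by simp⟩).val ++ [true] <+: (f ⟨[true], by simp⟩).val :=
    hf.2.2 _ _ true (by simp)
  have hg0 := hg.2.2 _ _ false hb0
  have hg1 := hg.2.2 _ _ true hb1
  funext z
  rcases bstr1_val z with hz | hz | hz
  · have hzeq : z = (⟨[], by simp⟩ : BStr 1) := Subtype.ext hz
    rw [hzeq]
    show g (f ⟨[], by simp⟩) = _
    apply Subtype.ext
    rw [tripleFun_0]
    exact (cp_eq_of_branch _ _ _ hg0 hg1).symm
  · have hzeq : z = (⟨[false], by simp⟩ : BStr 1) := Subtype.ext hz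
    rw [hzeq]
    show g (f ⟨[false], by simp⟩) = _
    rw [tripleFun_f]
  · have hzeq : z = (⟨[true], by simp⟩ : BStr 1) := Subtype.ext hz
    rw [hzeq]
    show g (f ⟨[true], by simp⟩) = _
    rw [tripleFun_t]

theorem sc_triple {M : ℕ} (u v0 v1 : BStr M)
    (h0 : u.val ++ [false] <+: v0.val) (h1 : u.val ++ [true] <+: v1.val) :
    StrongCopy 1 M (tripleFun v0 v1) := by
  have hcp : cp v0.val v1.val = u.val := cp_eq_of_branch _ _ _ h0 h1
  have hval : ∀ z : BStr 1, (z.val = [] ∧ (tripleFun v0 v1 z).val = u.val) ∨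
      (z.val = [false] ∧ (tripleFun v0 v1 z).val = v0.val) ∨
      (z.val = [true] ∧ (tripleFun v0 v1 z).val = v1.val) := by
    intro z
    rcases bstr1_val z with hz | hz | hz
    · refine Or.inl ⟨hz, ?_⟩
      have hzeq : z = (⟨[], by simp⟩ : BStr 1) := Subtype.ext hz
      rw [hzeq, tripleFun_0]
      exact hcp
    · refine Or.inr (Or.inl ⟨hz, ?_⟩)
      have hzeq : z = (⟨[false], by simp⟩ : BStr 1) := Subtype.ext hz
      rw [hzeq, tripleFun_f]
    · refine Or.inr (Or.inr ⟨hz, ?_⟩)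
      have hzeq : z = (⟨[true], by simp⟩ : BStr 1) := Subtype.ext hz
      rw [hzeq, tripleFun_t]
  have hu0 : u.val <+: v0.val := (List.prefix_append _ _).trans h0
  have hu1 : u.val <+: v1.val := (List.prefix_append _ _).trans h1
  have hl0 : u.val.length < v0.val.length := by
    have := h0.length_le; simp at this; omega
  have hl1 : u.val.length < v1.val.length := by
    have := h1.length_le; simp at this; omega
  have hne : (false : Bool) ≠ true := by simp
  have h01 : ¬ v0.val <+: v1.val := branch_ne hne h0 h1
  have h10 : ¬ v1.val <+: v0.val := branch_ne (Ne.symm hne) h1 h0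
  have nuv0 : u.val ≠ v0.val := ne_of_proper h0
  have nuv1 : u.val ≠ v1.val := ne_of_proper h1
  have nv01 : v0.val ≠ v1.val := branch_ne' hne h0 h1
  refine ⟨?_, ?_, ?_⟩
  · intro z w hzw
    have hv := congrArg Subtype.val hzw
    rcases hval z with ⟨hz, hz'⟩ | ⟨hz, hz'⟩ | ⟨hz, hz'⟩ <;>
      rcases hval w with ⟨hw, hw'⟩ | ⟨hw, hw'⟩ | ⟨hw, hw'⟩
    · exact Subtype.ext (hz.trans hw.symm)
    · exact absurd ((hz'.symm.trans hv).trans hw') nuv0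
    · exact absurd ((hz'.symm.trans hv).trans hw') nuv1
    · exact absurd ((hw'.symm.trans hv.symm).trans hz') nuv0
    · exact Subtype.ext (hz.trans hw.symm)
    · exact absurd ((hz'.symm.trans hv).trans hw') nv01
    · exact absurd ((hw'.symm.trans hv.symm).trans hz') nuv1
    · exact absurd ((hw'.symm.trans hv.symm).trans hz') nv01
    · exact Subtype.ext (hz.trans hw.symm)
  · intro z w
    rcases hval z with ⟨hz, hz'⟩ | ⟨hz, hz'⟩ | ⟨hz, hz'⟩ <;>
      rcases hval w with ⟨hw, hw'⟩ | ⟨hw, hw'⟩ | ⟨hw, hw'⟩ <;>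
      rw [hz, hw, hz', hw']
    · simp
    · simp [hu0]
    · simp [hu1]
    · constructor
      · intro hh; exact absurd hh.length_le (by simp)
      · intro hh; exact absurd hh.length_le (by omega)
    · simp
    · constructor
      · intro hh; exact absurd (List.cons_prefix_cons.mp hh).1 (by simp)
      · intro hh; exact absurd hh h01
    · constructor
      · intro hh; exact absurd hh.length_le (by simp)
      · intro hh; exact absurd hh.length_le (by omega)
    · constructor
      · intro hh; exact absurd (List.cons_prefix_cons.mp hh).1 (by simp)
      · intro hh; exact absurd hh h10
    · simp
  · intro z w b hzw
    rcases hval z with ⟨hz, hz'⟩ | ⟨hz, hz'⟩ | ⟨hz, hz'⟩ <;>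
      rcases hval w with ⟨hw, hw'⟩ | ⟨hw, hw'⟩ | ⟨hw, hw'⟩ <;>
      rw [hz, hw] at hzw <;> rw [hz', hw']
    · exact absurd hzw.length_le (by simp)
    · obtain rfl : b = false := (List.cons_prefix_cons.mp hzw).1
      exact h0
    · obtain rfl : b = true := (List.cons_prefix_cons.mp hzw).1
      exact h1
    · exact absurd hzw.length_le (by simp)
    · exact absurd hzw.length_le (by simp)
    · exact absurd hzw.length_le (by simp)
    · exact absurd hzw.length_le (by simp)
    · exact absurd hzw.length_le (by simp)
    · exact absurd hzw.length_le (by simp)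

end Triple

section Milliken

theorem milliken (R : ℕ) (hR : 0 < R) :
    ∃ N, ∀ φ : (BStr 1 → BStr N) → Fin R,
      ∃ g : BStr 3 → BStr N, StrongCopy 3 N g ∧
        ∃ c : Fin R, ∀ f : BStr 1 → BStr 3, StrongCopy 1 3 f → φ (g ∘ f) = c := by
  obtain ⟨H, hV⟩ := treeV R 3
  obtain ⟨N, hF⟩ := endHom R hR H
  refine ⟨N, fun φ => ?_⟩
  obtain ⟨gF, χ, hgF, hprop⟩ := hF (fun x y => φ (tripleFun x y))
  obtain ⟨gV, c, hgV, hmono⟩ := hV χ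
  refine ⟨gF ∘ gV, sc_comp hgV hgF, c, fun f hf => ?_⟩
  have hg : StrongCopy 3 N (gF ∘ gV) := sc_comp hgV hgF
  have hcomp := tripleFun_comp hf hg
  rw [hcomp]
  have hb0 : (f ⟨[], by simp⟩).val ++ [false] <+: (f ⟨[false], by simp⟩).val :=
    hf.2.2 _ _ false (by simp)
  have hb1 : (f ⟨[], by simp⟩).val ++ [true] <+: (f ⟨[true], by simp⟩).val :=
    hf.2.2 _ _ true (by simp)
  have hc0 : (gV (f ⟨[], by simp⟩)).val ++ [false] <+: (gV (f ⟨[false], by simp⟩)).val :=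
    hgV.2.2 _ _ false hb0
  have hc1 : (gV (f ⟨[], by simp⟩)).val ++ [true] <+: (gV (f ⟨[true], by simp⟩)).val :=
    hgV.2.2 _ _ true hb1
  have := hprop (gV (f ⟨[false], by simp⟩)) (gV (f ⟨[true], by simp⟩))
    (gV (f ⟨[], by simp⟩)) hc0 hc1
  rw [show ((gF ∘ gV) (f ⟨[false], by simp⟩)) = gF (gV (f ⟨[false], by simp⟩)) from rfl,
    show ((gF ∘ gV) (f ⟨[true], by simp⟩)) = gF (gV (f ⟨[true], by simp⟩)) from rfl]
  rw [this]
  exact hmono _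

theorem btram_upward (R : ℕ) (hR : 0 < R) {n : ℕ} (hn : BTRam 1 3 R ≤ n) :
    ∀ φ : (BStr 1 → BStr n) → Fin R,
      ∃ g : BStr 3 → BStr n, StrongCopy 3 n g ∧
        ∃ c : Fin R, ∀ f : BStr 1 → BStr 3, StrongCopy 1 3 f → φ (g ∘ f) = c := by
  have hne : {k | ∀ φ : (BStr 1 → BStr k) → Fin R,
      ∃ g : BStr 3 → BStr k, StrongCopy 3 k g ∧
        ∃ c : Fin R, ∀ f : BStr 1 → BStr 3, StrongCopy 1 3 f → φ (g ∘ f) = c}.Nonempty :=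
    milliken R hR
  have hmem := Nat.sInf_mem hne
  have hrfl : BTRam 1 3 R = sInf {k | ∀ φ : (BStr 1 → BStr k) → Fin R,
      ∃ g : BStr 3 → BStr k, StrongCopy 3 k g ∧
        ∃ c : Fin R, ∀ f : BStr 1 → BStr 3, StrongCopy 1 3 f → φ (g ∘ f) = c} := rfl
  rw [hrfl] at hn
  intro φ
  have hemb : ([] : List Bool).length + sInf {k | ∀ φ : (BStr 1 → BStr k) → Fin R,
      ∃ g : BStr 3 → BStr k, StrongCopy 3 k g ∧
        ∃ c : Fin R, ∀ f : BStr 1 → BStr 3, StrongCopy 1 3 f → φ (g ∘ f) = c} ≤ n := by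
    simpa using hn
  obtain ⟨g₀, hg₀, c, hm⟩ := hmem (fun F => φ (embedMap [] hemb ∘ F))
  exact ⟨embedMap [] hemb ∘ g₀, sc_comp hg₀ (sc_embed _ _), c, fun f hf => hm f hf⟩

end Milliken

section Poset

open Classical in
/-- a two-element partial linear extension realizing / reversing the pair `p` -/
noncomputable def pairPLE {α : Type*} [PartialOrder α] (p : α × α) : PLE α where
  S := {p.1, p.2}
  r := fun a b => (a = p.1 ∨ a = p.2) ∧ (b = p.1 ∨ b = p.2) ∧
    (a = b ∨ (a = p.1 ∧ b = p.2 ∧ p.1 ≤ p.2) ∨ (a = p.2 ∧ b = p.1 ∧ ¬ p.1 ≤ p.2))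
  mem_of_rel := fun x y h => ⟨by rcases h.1 with h1 | h1 <;> simp [h1],
    by rcases h.2.1 with h1 | h1 <;> simp [h1]⟩
  refl := fun x hx => by
    rcases hx with h | h
    · exact ⟨Or.inl h, Or.inl h, Or.inl rfl⟩
    · exact ⟨Or.inr h, Or.inr h, Or.inl rfl⟩
  antisymm' := by
    intro x y hxy hyx
    rcases hxy.2.2 with h | ⟨hx1, hy2, hle⟩ | ⟨hx2, hy1, hnle⟩
    · exact h
    · rcases hyx.2.2 with h | ⟨hy1, hx2, _⟩ | ⟨hy2', hx1', hnle⟩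
      · exact h.symm
      · exact hx1.trans hy1.symm
      · exact absurd hle hnle
    · rcases hyx.2.2 with h | ⟨hy1, hx2', hle⟩ | ⟨hy2, hx1, hnle'⟩
      · exact h.symm
      · exact absurd hle hnle
      · exact hx2.trans hy2.symm
  trans' := by
    intro x y z hxy hyz
    refine ⟨hxy.1, hyz.2.1, ?_⟩
    rcases hxy.2.2 with h | ⟨hx1, hy2, hle⟩ | ⟨hx2, hy1, hnle⟩
    · rw [h]
      exact hyz.2.2
    · rcases hyz.2.2 with h | ⟨hy1, hz2, hle'⟩ | ⟨hy2', hz1, hnle⟩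
      · exact Or.inr (Or.inl ⟨hx1, h ▸ hy2, hle⟩)
      · exact Or.inr (Or.inl ⟨hx1, hz2, hle⟩)
      · exact absurd hle hnle
    · rcases hyz.2.2 with h | ⟨hy1', hz2, hle⟩ | ⟨hy2, hz1, hnle'⟩
      · exact Or.inr (Or.inr ⟨hx2, h ▸ hy1, hnle⟩)
      · exact absurd hle hnle
      · exact Or.inr (Or.inr ⟨hx2, hz1, hnle⟩)
  total := by
    intro x hx y hy
    simp only [Set.mem_insert_iff, Set.mem_singleton_iff] at hx hy
    rcases hx with hx | hx <;> rcases hy with hy | hy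
    · exact Or.inl ⟨Or.inl hx, Or.inl hy, Or.inl (hx.trans hy.symm)⟩
    · by_cases hle : p.1 ≤ p.2
      · exact Or.inl ⟨Or.inl hx, Or.inr hy, Or.inr (Or.inl ⟨hx, hy, hle⟩)⟩
      · exact Or.inr ⟨Or.inr hy, Or.inl hx, Or.inr (Or.inr ⟨hy, hx, hle⟩)⟩
    · by_cases hle : p.1 ≤ p.2
      · exact Or.inr ⟨Or.inl hy, Or.inr hx, Or.inr (Or.inl ⟨hy, hx, hle⟩)⟩
      · exact Or.inl ⟨Or.inr hx, Or.inl hy, Or.inr (Or.inr ⟨hx, hy, hle⟩)⟩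
    · exact Or.inl ⟨Or.inr hx, Or.inr hy, Or.inl (hx.trans hy.symm)⟩
  extends_le := by
    intro x hx y hy hxy
    simp only [Set.mem_insert_iff, Set.mem_singleton_iff] at hx hy
    rcases hx with hx | hx <;> rcases hy with hy | hy
    · exact ⟨Or.inl hx, Or.inl hy, Or.inl (hx.trans hy.symm)⟩
    · refine ⟨Or.inl hx, Or.inr hy, Or.inr (Or.inl ⟨hx, hy, ?_⟩)⟩
      rw [hx, hy] at hxy
      exact hxy
    · rw [hx, hy] at hxy
      by_cases hle : p.1 ≤ p.2
      · have heq : p.1 = p.2 := le_antisymm hle hxy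
        exact ⟨Or.inr hx, Or.inl hy, Or.inl (hx.trans (heq.symm.trans hy.symm))⟩
      · exact ⟨Or.inr hx, Or.inl hy, Or.inr (Or.inr ⟨hx, hy, hle⟩)⟩
    · exact ⟨Or.inr hx, Or.inr hy, Or.inl (hx.trans hy.symm)⟩

theorem ldim_set_nonempty (α : Type*) [PartialOrder α] [Fintype α] [DecidableEq α] :
    {k | 0 < k ∧ ∃ (t : ℕ) (L : Fin t → PLE α),
      IsLocalRealizer L ∧ ∀ u : α, ({i | u ∈ (L i).S} : Set (Fin t)).ncard ≤ k}.Nonempty := by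
  classical
  set e := Fintype.equivFin (α × α) with he
  refine ⟨Fintype.card (α × α) + 1, Nat.succ_pos _, Fintype.card (α × α),
    fun i => pairPLE (e.symm i), ⟨?_, ?_⟩, fun u => ?_⟩
  · intro x y _
    refine ⟨e (x, y), ?_, ?_⟩
    · show x ∈ (pairPLE (e.symm (e (x, y)))).S
      rw [Equiv.symm_apply_apply]
      exact Set.mem_insert _ _
    · show y ∈ (pairPLE (e.symm (e (x, y)))).S
      rw [Equiv.symm_apply_apply]
      exact Set.mem_insert_iff.mpr (Or.inr rfl)
  · intro x y hxy hyx
    refine ⟨e (x, y), ?_⟩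
    show (pairPLE (e.symm (e (x, y)))).r y x
    rw [Equiv.symm_apply_apply]
    exact ⟨Or.inr rfl, Or.inl rfl, Or.inr (Or.inr ⟨rfl, rfl, hxy⟩)⟩
  · show ({i | u ∈ (pairPLE (e.symm i)).S} : Set (Fin (Fintype.card (α × α)))).ncard ≤
        Fintype.card (α × α) + 1
    have h1 : ({i | u ∈ (pairPLE (e.symm i)).S} : Set (Fin (Fintype.card (α × α)))).ncard ≤
        (Set.univ : Set (Fin (Fintype.card (α × α)))).ncard :=
      Set.ncard_le_ncard (Set.subset_univ _) Set.finite_univ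
    rw [Set.ncard_univ] at h1
    simp only [Nat.card_eq_fintype_card, Fintype.card_fin] at h1
    omega

theorem pos_inj' {t : ℕ} (M : Fin t → Prop) {i i' : Fin t} (hi : M i) (hi' : M i')
    (h : ({j | M j ∧ j < i} : Set (Fin t)).ncard = ({j | M j ∧ j < i'} : Set (Fin t)).ncard) :
    i = i' := by
  have key : ∀ a b : Fin t, M a → M b → a < b →
      ({j | M j ∧ j < a} : Set (Fin t)).ncard < ({j | M j ∧ j < b} : Set (Fin t)).ncard := by
    intro a b ha hb hab
    apply Set.ncard_lt_ncard _ (Set.toFinite _)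
    constructor
    · intro j hj
      exact ⟨hj.1, hj.2.trans hab⟩
    · intro hsub
      have := hsub ⟨ha, hab⟩
      exact lt_irrefl a this.2
  rcases lt_trichotomy i i' with hlt | heq | hlt
  · exact absurd h (Nat.ne_of_lt (key i i' hi hi' hlt))
  · exact heq
  · exact absurd h.symm (Nat.ne_of_lt (key i' i hi' hi hlt))

theorem pos_lt' {t : ℕ} (M : Fin t → Prop) {i : Fin t} (hi : M i) {d : ℕ}
    (hM : ({j | M j} : Set (Fin t)).ncard ≤ d) :
    ({j | M j ∧ j < i} : Set (Fin t)).ncard < d := by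
  have hsub : ({j | M j ∧ j < i} : Set (Fin t)) ⊆ {j | M j} \ {i} := by
    intro j hj
    exact ⟨hj.1, fun he => absurd hj.2 (by simp at he; simp [he])⟩
  have h1 : ({j | M j ∧ j < i} : Set (Fin t)).ncard ≤ (({j | M j} : Set (Fin t)) \ {i}).ncard :=
    Set.ncard_le_ncard hsub (Set.toFinite _)
  have h2 : (({j | M j} : Set (Fin t)) \ {i}).ncard = ({j | M j} : Set (Fin t)).ncard - 1 :=
    Set.ncard_diff_singleton_of_mem hi
  have h3 : 0 < ({j | M j} : Set (Fin t)).ncard :=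
    (Set.ncard_pos (Set.toFinite _)).mpr ⟨i, hi⟩
  omega

theorem encode_lt {d p1 p2 : ℕ} (h1 : p1 < d) (h2 : p2 < d) : p1 * d + p2 < d * d := by
  nlinarith

theorem decode_eq {d A B A' B' : ℕ} (hB : B < d) (hB' : B' < d)
    (h : A * d + B = A' * d + B') : A = A' ∧ B = B' := by
  have hA : A = A' := by
    have h1 : ¬ A < A' := fun hlt => by nlinarith
    have h2 : ¬ A' < A := fun hlt => by nlinarith
    omega
  subst hA
  exact ⟨rfl, by omega⟩

end Poset

section JMWLemmas

theorem jmw_le_iff {n : ℕ} (p q : JMW n) : p ≤ q ↔ (p = q ∨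
    (p.1 = true ∧ q.1 = true ∧ p.2.val <+: q.2.val) ∨
    (p.1 = false ∧ q.1 = false ∧ q.2.val <+: p.2.val) ∨
    (p.1 = false ∧ q.1 = true ∧ ¬ p.2.val <+: q.2.val ∧ ¬ q.2.val <+: p.2.val)) := Iff.rfl

def Aelem {n : ℕ} (s : BStr n) : JMW n := (false, s)
def Belem {n : ℕ} (u : BStr n) : JMW n := (true, u)

theorem Aelem_fst {n : ℕ} (s : BStr n) : (Aelem s).1 = false := rfl
theorem Belem_fst {n : ℕ} (u : BStr n) : (Belem u).1 = true := rfl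

theorem not_B_le_A {n : ℕ} (u s : BStr n) : ¬ (Belem u ≤ Aelem s) := by
  rw [jmw_le_iff]
  rintro (h | ⟨-, h2, -⟩ | ⟨h1, -⟩ | ⟨h1, -⟩)
  · exact absurd (congrArg Prod.fst h) (by simp [Aelem, Belem])
  · exact absurd h2 (by simp [Aelem])
  · exact absurd h1 (by simp [Belem])
  · exact absurd h1 (by simp [Belem])

theorem not_A_le_B_of_prefix {n : ℕ} {s u : BStr n} (hsu : s.val <+: u.val) :
    ¬ (Aelem s ≤ Belem u) := by
  rw [jmw_le_iff]
  rintro (h | ⟨h1, -⟩ | ⟨-, h2, -⟩ | ⟨-, -, h3, -⟩)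
  · exact absurd (congrArg Prod.fst h) (by simp [Aelem, Belem])
  · exact absurd h1 (by simp [Aelem])
  · exact absurd h2 (by simp [Belem])
  · exact h3 hsu

theorem A_le_B {n : ℕ} {s u : BStr n} (h1 : ¬ s.val <+: u.val) (h2 : ¬ u.val <+: s.val) :
    Aelem s ≤ Belem u :=
  (jmw_le_iff _ _).mpr (Or.inr (Or.inr (Or.inr ⟨rfl, rfl, h1, h2⟩)))

/-! concrete nodes of `T₃` -/

def sE : BStr 3 := ⟨[], by simp⟩
def s00 : BStr 3 := ⟨[false, false], by simp⟩
def s01 : BStr 3 := ⟨[false, true], by simp⟩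
def s000 : BStr 3 := ⟨[false, false, false], by simp⟩
def s001 : BStr 3 := ⟨[false, false, true], by simp⟩
def s010 : BStr 3 := ⟨[false, true, false], by simp⟩
def s011 : BStr 3 := ⟨[false, true, true], by simp⟩
def s1 : BStr 3 := ⟨[true], by simp⟩

theorem hsc1 : StrongCopy 1 3 (tripleFun s010 s011) := sc_triple s01 s010 s011 (by decide) (by decide)
theorem hsc2 : StrongCopy 1 3 (tripleFun s010 s1) := sc_triple sE s010 s1 (by decide) (by decide)
theorem hsc3 : StrongCopy 1 3 (tripleFun s000 s1) := sc_triple sE s000 s1 (by decide) (by decide)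
theorem hsc4 : StrongCopy 1 3 (tripleFun s000 s001) := sc_triple s00 s000 s001 (by decide) (by decide)

theorem root1 (h) : tripleFun s010 s011 ⟨[], h⟩ = s01 :=
  Subtype.ext ((tripleFun_0 _ _ _).trans (by decide))
theorem root2 (h) : tripleFun s010 s1 ⟨[], h⟩ = sE :=
  Subtype.ext ((tripleFun_0 _ _ _).trans (by decide))
theorem root3 (h) : tripleFun s000 s1 ⟨[], h⟩ = sE :=
  Subtype.ext ((tripleFun_0 _ _ _).trans (by decide))
theorem root4 (h) : tripleFun s000 s001 ⟨[], h⟩ = s00 :=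
  Subtype.ext ((tripleFun_0 _ _ _).trans (by decide))

end JMWLemmas

section Coloring

variable {n d t : ℕ}

/-- the JMW coloring of a pair: positions of the chosen reversing ple in the
lists of the two endpoints -/
noncomputable def colorOf (hd : 0 < d) (L : Fin t → PLE (JMW n))
    (D : ∀ u s : BStr n, s.val <+: u.val → Fin t)
    (hpos : ∀ (u s : BStr n) (h : s.val <+: u.val),
      ({j | Aelem s ∈ (L j).S ∧ j < D u s h} : Set (Fin t)).ncard < d ∧
      ({j | Belem u ∈ (L j).S ∧ j < D u s h} : Set (Fin t)).ncard < d) :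
    BStr n → BStr n → Fin (d * d) := fun a b =>
  if h : a.val <+: b.val then
    ⟨({j | Aelem a ∈ (L j).S ∧ j < D b a h} : Set (Fin t)).ncard * d +
      ({j | Belem b ∈ (L j).S ∧ j < D b a h} : Set (Fin t)).ncard,
      encode_lt (hpos b a h).1 (hpos b a h).2⟩
  else ⟨0, Nat.mul_pos hd hd⟩

theorem colorOf_val (hd : 0 < d) (L : Fin t → PLE (JMW n))
    (D : ∀ u s : BStr n, s.val <+: u.val → Fin t)
    (hpos : ∀ (u s : BStr n) (h : s.val <+: u.val),
      ({j | Aelem s ∈ (L j).S ∧ j < D u s h} : Set (Fin t)).ncard < d ∧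
      ({j | Belem u ∈ (L j).S ∧ j < D u s h} : Set (Fin t)).ncard < d)
    (a b : BStr n) (h : a.val <+: b.val) :
    (colorOf hd L D hpos a b).val =
      ({j | Aelem a ∈ (L j).S ∧ j < D b a h} : Set (Fin t)).ncard * d +
      ({j | Belem b ∈ (L j).S ∧ j < D b a h} : Set (Fin t)).ncard := by
  rw [colorOf, dif_pos h]

end Coloring

end JMWaux

/-- For every `d ≥ 2`, if `n ≥ BTRam(1,3,d²)` then the Joret–Micek–Wiechert poset `P_n`
has local dimension greater than `d`. -/
theorem ldim_JMW_gt (d : ℕ) (hd : 2 ≤ d) (n : ℕ) (hn : BTRam 1 3 (d * d) ≤ n) :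
    d < ldim (JMW n) := by
  classical
  haveI : Fintype (JMW n) := (inferInstance : Fintype (Bool × BStr n))
  haveI : DecidableEq (JMW n) := inferInstanceAs (DecidableEq (Bool × BStr n))
  by_contra hcon
  push_neg at hcon
  obtain ⟨hk0, t, L, hreal, hfreq⟩ := Nat.sInf_mem (JMWaux.ldim_set_nonempty (JMW n))
  have hfreqd : ∀ u : JMW n, ({i | u ∈ (L i).S} : Set (Fin t)).ncard ≤ d :=
    fun u => le_trans (hfreq u) hcon
  have hdpos : 0 < d := Nat.lt_of_lt_of_le (by decide) hd
  have hrev : ∀ u s : BStr n, s.val <+: u.val →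
      ∃ i, (L i).r (JMWaux.Belem u) (JMWaux.Aelem s) :=
    fun u s h => hreal.2 (JMWaux.Aelem s) (JMWaux.Belem u)
      (JMWaux.not_A_le_B_of_prefix h) (JMWaux.not_B_le_A u s)
  choose D hD using hrev
  have hmemD : ∀ (u s : BStr n) (h : s.val <+: u.val),
      JMWaux.Belem u ∈ (L (D u s h)).S ∧ JMWaux.Aelem s ∈ (L (D u s h)).S :=
    fun u s h => (L (D u s h)).mem_of_rel _ _ (hD u s h)
  have hpos : ∀ (u s : BStr n) (h : s.val <+: u.val),
      ({j | JMWaux.Aelem s ∈ (L j).S ∧ j < D u s h} : Set (Fin t)).ncard < d ∧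
      ({j | JMWaux.Belem u ∈ (L j).S ∧ j < D u s h} : Set (Fin t)).ncard < d := by
    intro u s h
    constructor
    · exact JMWaux.pos_lt' (fun j => JMWaux.Aelem s ∈ (L j).S) (hmemD u s h).2 (hfreqd _)
    · exact JMWaux.pos_lt' (fun j => JMWaux.Belem u ∈ (L j).S) (hmemD u s h).1 (hfreqd _)
  obtain ⟨g, hg, c, hmono⟩ := JMWaux.btram_upward (d * d) (Nat.mul_pos hdpos hdpos) hn
    (fun F => JMWaux.colorOf hdpos L D hpos (F ⟨[], by simp⟩) (F ⟨[false], by simp⟩))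
  -- the four sub-copies of T₁ inside the monochromatic copy of T₃
  have e1 : JMWaux.colorOf hdpos L D hpos
      (g (JMWaux.tripleFun JMWaux.s010 JMWaux.s011 ⟨[], by simp⟩))
      (g (JMWaux.tripleFun JMWaux.s010 JMWaux.s011 ⟨[false], by simp⟩)) = c :=
    hmono _ JMWaux.hsc1
  have e2 : JMWaux.colorOf hdpos L D hpos
      (g (JMWaux.tripleFun JMWaux.s010 JMWaux.s1 ⟨[], by simp⟩))
      (g (JMWaux.tripleFun JMWaux.s010 JMWaux.s1 ⟨[false], by simp⟩)) = c :=
    hmono _ JMWaux.hsc2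
  have e3 : JMWaux.colorOf hdpos L D hpos
      (g (JMWaux.tripleFun JMWaux.s000 JMWaux.s1 ⟨[], by simp⟩))
      (g (JMWaux.tripleFun JMWaux.s000 JMWaux.s1 ⟨[false], by simp⟩)) = c :=
    hmono _ JMWaux.hsc3
  have e4 : JMWaux.colorOf hdpos L D hpos
      (g (JMWaux.tripleFun JMWaux.s000 JMWaux.s001 ⟨[], by simp⟩))
      (g (JMWaux.tripleFun JMWaux.s000 JMWaux.s001 ⟨[false], by simp⟩)) = c :=
    hmono _ JMWaux.hsc4
  rw [JMWaux.root1, JMWaux.tripleFun_f] at e1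
  rw [JMWaux.root2, JMWaux.tripleFun_f] at e2
  rw [JMWaux.root3, JMWaux.tripleFun_f] at e3
  rw [JMWaux.root4, JMWaux.tripleFun_f] at e4
  -- prefix facts about images
  have hpre1 : (g JMWaux.s01).val <+: (g JMWaux.s010).val :=
    (hg.2.1 JMWaux.s01 JMWaux.s010).mp (by decide)
  have hpre2 : (g JMWaux.sE).val <+: (g JMWaux.s010).val :=
    (hg.2.1 JMWaux.sE JMWaux.s010).mp (by decide)
  have hpre3 : (g JMWaux.sE).val <+: (g JMWaux.s000).val :=
    (hg.2.1 JMWaux.sE JMWaux.s000).mp (by decide)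
  have hpre4 : (g JMWaux.s00).val <+: (g JMWaux.s000).val :=
    (hg.2.1 JMWaux.s00 JMWaux.s000).mp (by decide)
  -- value equations
  have v1 := congrArg Fin.val e1
  have v2 := congrArg Fin.val e2
  have v3 := congrArg Fin.val e3
  have v4 := congrArg Fin.val e4
  rw [JMWaux.colorOf_val hdpos L D hpos _ _ hpre1] at v1
  rw [JMWaux.colorOf_val hdpos L D hpos _ _ hpre2] at v2
  rw [JMWaux.colorOf_val hdpos L D hpos _ _ hpre3] at v3
  rw [JMWaux.colorOf_val hdpos L D hpos _ _ hpre4] at v4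
  -- decode: all four chosen ples coincide
  have d12 := JMWaux.decode_eq (hpos _ _ hpre1).2 (hpos _ _ hpre2).2 (v1.trans v2.symm)
  have d23 := JMWaux.decode_eq (hpos _ _ hpre2).2 (hpos _ _ hpre3).2 (v2.trans v3.symm)
  have d34 := JMWaux.decode_eq (hpos _ _ hpre3).2 (hpos _ _ hpre4).2 (v3.trans v4.symm)
  have h12 : D (g JMWaux.s010) (g JMWaux.s01) hpre1 = D (g JMWaux.s010) (g JMWaux.sE) hpre2 :=
    JMWaux.pos_inj' (fun j => JMWaux.Belem (g JMWaux.s010) ∈ (L j).S)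
      (hmemD _ _ hpre1).1 (hmemD _ _ hpre2).1 d12.2
  have h23 : D (g JMWaux.s010) (g JMWaux.sE) hpre2 = D (g JMWaux.s000) (g JMWaux.sE) hpre3 :=
    JMWaux.pos_inj' (fun j => JMWaux.Aelem (g JMWaux.sE) ∈ (L j).S)
      (hmemD _ _ hpre2).2 (hmemD _ _ hpre3).2 d23.1
  have h34 : D (g JMWaux.s000) (g JMWaux.sE) hpre3 = D (g JMWaux.s000) (g JMWaux.s00) hpre4 :=
    JMWaux.pos_inj' (fun j => JMWaux.Belem (g JMWaux.s000) ∈ (L j).S)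
      (hmemD _ _ hpre3).1 (hmemD _ _ hpre4).1 d34.2
  set I := D (g JMWaux.s010) (g JMWaux.s01) hpre1 with hI
  have hr1 : (L I).r (JMWaux.Belem (g JMWaux.s010)) (JMWaux.Aelem (g JMWaux.s01)) :=
    hD _ _ hpre1
  have hr4 : (L I).r (JMWaux.Belem (g JMWaux.s000)) (JMWaux.Aelem (g JMWaux.s00)) := by
    rw [h12, h23, h34]
    exact hD _ _ hpre4
  have m1 := (L I).mem_of_rel _ _ hr1
  have m4 := (L I).mem_of_rel _ _ hr4
  -- true comparabilities transported through g
  have t1 : JMWaux.Aelem (g JMWaux.s01) ≤ JMWaux.Belem (g JMWaux.s000) :=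
    JMWaux.A_le_B
      (fun hh => (by decide : ¬ JMWaux.s01.val <+: JMWaux.s000.val) ((hg.2.1 _ _).mpr hh))
      (fun hh => (by decide : ¬ JMWaux.s000.val <+: JMWaux.s01.val) ((hg.2.1 _ _).mpr hh))
  have t2 : JMWaux.Aelem (g JMWaux.s00) ≤ JMWaux.Belem (g JMWaux.s010) :=
    JMWaux.A_le_B
      (fun hh => (by decide : ¬ JMWaux.s00.val <+: JMWaux.s010.val) ((hg.2.1 _ _).mpr hh))
      (fun hh => (by decide : ¬ JMWaux.s010.val <+: JMWaux.s00.val) ((hg.2.1 _ _).mpr hh))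
  have rt1 : (L I).r (JMWaux.Aelem (g JMWaux.s01)) (JMWaux.Belem (g JMWaux.s000)) :=
    (L I).extends_le _ m1.2 _ m4.1 t1
  have rt2 : (L I).r (JMWaux.Aelem (g JMWaux.s00)) (JMWaux.Belem (g JMWaux.s010)) :=
    (L I).extends_le _ m4.2 _ m1.1 t2
  have hloop : (L I).r (JMWaux.Aelem (g JMWaux.s01)) (JMWaux.Belem (g JMWaux.s010)) :=
    (L I).trans' _ _ _ rt1 ((L I).trans' _ _ _ hr4 rt2)
  have heq := (L I).antisymm' _ _ hr1 hloop
  exact absurd (congrArg Prod.fst heq) (by simp [JMWaux.Aelem, JMWaux.Belem])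
end
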